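/- arXiv:2604.26096 — 4 statements merged into one kernel-verified Lean document; each statement's English description precedes it below -/
import Mathlib

section
/- For $1\le q<\infty$, the Netrusov–Hausdorff outer measure $\mathcal{H}_{\alpha,q}$ is additive on positively separated sets: if $\mathrm{dist}(A_1,A_2)>0$ then $\mathcal{H}_{\alpha,q}(A_1\cup A_2)=\mathcal{H}_{\alpha,q}(A_1)+\mathcal{H}_{\alpha,q}(A_2)$; consequently $\mathcal{H}_{\alpha,q}$ is a Borel (metric outer) measure. -/
open Set MeasureTheory ENNReal

noncomputable section

/-- Euclidean space `ℝ^d`. -/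
abbrev Euc (d : ℕ) := EuclideanSpace ℝ (Fin d)

/-- The dyadic block `∑_{diam B_j ∈ [2^{-k-1}, 2^{-k})} (diam B_j)^α` of a covering. -/
def dyadicBlock {d : ℕ} (α : ℝ) (B : ℕ → Set (Euc d)) (k : ℤ) : ℝ≥0∞ :=
  ∑' j : ℕ, (Set.Ico ((2 : ℝ≥0∞) ^ (-k - 1)) ((2 : ℝ≥0∞) ^ (-k))).indicator
    (fun t => t ^ α) (EMetric.diam (B j))

/-- The Netrusov--Hausdorff capacity `𝓗_{α,q}` for finite `q`:
`𝓗_{α,q}(F) = lim_{δ→0} inf { ∑_k (∑_{diam B_j ∈ Δ_k} (diam B_j)^α)^q :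
F ⊆ ⋃ B_j, diam B_j < δ }`. -/
def NHfin (d : ℕ) (α q : ℝ) (F : Set (Euc d)) : ℝ≥0∞ :=
  ⨆ (δ : ℝ≥0∞) (_ : 0 < δ),
    ⨅ (B : ℕ → Set (Euc d)) (_ : F ⊆ ⋃ j, B j) (_ : ∀ j, EMetric.diam (B j) < δ),
      ∑' k : ℤ, (dyadicBlock α B k) ^ q

/-- The Netrusov--Hausdorff capacity `𝓗_{α,∞}`, with the outer sum over dyadic scales
replaced by a supremum. -/
def NHinf (d : ℕ) (α : ℝ) (F : Set (Euc d)) : ℝ≥0∞ :=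
  ⨆ (δ : ℝ≥0∞) (_ : 0 < δ),
    ⨅ (B : ℕ → Set (Euc d)) (_ : F ⊆ ⋃ j, B j) (_ : ∀ j, EMetric.diam (B j) < δ),
      ⨆ k : ℤ, dyadicBlock α B k

namespace NHaux

variable {d : ℕ}

/-- total cost of a covering -/
def cost (α q : ℝ) (B : ℕ → Set (Euc d)) : ℝ≥0∞ := ∑' k : ℤ, dyadicBlock α B k ^ q

def covInf (α q : ℝ) (δ : ℝ≥0∞) (F : Set (Euc d)) : ℝ≥0∞ :=
  ⨅ (B : ℕ → Set (Euc d)) (_ : F ⊆ ⋃ j, B j) (_ : ∀ j, EMetric.diam (B j) < δ), cost α q B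

lemma NHfin_eq (α q : ℝ) (F : Set (Euc d)) :
    NHfin d α q F = ⨆ (δ : ℝ≥0∞) (_ : 0 < δ), covInf α q δ F := rfl

lemma covInf_anti (α q : ℝ) (F : Set (Euc d)) {δ₁ δ₂ : ℝ≥0∞} (h : δ₁ ≤ δ₂) :
    covInf α q δ₂ F ≤ covInf α q δ₁ F := by
  refine le_iInf₂ fun B hB => le_iInf fun hd => ?_
  exact iInf₂_le_of_le B hB (iInf_le_of_le (fun j => lt_of_lt_of_le (hd j) h) le_rfl)

lemma covInf_mono (α q : ℝ) (δ : ℝ≥0∞) {F₁ F₂ : Set (Euc d)} (h : F₁ ⊆ F₂) :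
    covInf α q δ F₁ ≤ covInf α q δ F₂ := by
  refine le_iInf₂ fun B hB => le_iInf fun hd => ?_
  exact iInf₂_le_of_le B (h.trans hB) (iInf_le_of_le hd le_rfl)

lemma covInf_le_NHfin (α q : ℝ) {δ : ℝ≥0∞} (hδ : 0 < δ) (F : Set (Euc d)) :
    covInf α q δ F ≤ NHfin d α q F := by
  rw [NHfin_eq]; exact le_iSup₂ (f := fun δ (_ : 0 < δ) => covInf α q δ F) δ hδ

lemma NHfin_le_iff (α q : ℝ) (F : Set (Euc d)) (c : ℝ≥0∞) :
    NHfin d α q F ≤ c ↔ ∀ δ : ℝ≥0∞, 0 < δ → covInf α q δ F ≤ c := by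
  rw [NHfin_eq]; simp [iSup_le_iff]

lemma exists_cover {α q : ℝ} {δ : ℝ≥0∞} {F : Set (Euc d)} {c : ℝ≥0∞}
    (h : covInf α q δ F < c) :
    ∃ B : ℕ → Set (Euc d), (F ⊆ ⋃ j, B j) ∧ (∀ j, EMetric.diam (B j) < δ) ∧ cost α q B < c := by
  simp only [covInf, iInf_lt_iff] at h
  obtain ⟨B, hx, hy, hz⟩ := h
  exact ⟨B, hx, hy, hz⟩

lemma NHfin_mono (α q : ℝ) {F₁ F₂ : Set (Euc d)} (h : F₁ ⊆ F₂) :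
    NHfin d α q F₁ ≤ NHfin d α q F₂ := by
  rw [NHfin_le_iff]
  exact fun δ hδ => (covInf_mono α q δ h).trans (covInf_le_NHfin α q hδ F₂)

lemma two_zpow_pos (k : ℤ) : (0 : ℝ≥0∞) < 2 ^ k :=
  ENNReal.zpow_pos (by norm_num) (by norm_num) k

lemma two_zpow_lt_top (k : ℤ) : (2 : ℝ≥0∞) ^ k < ⊤ :=
  ENNReal.zpow_lt_top (by norm_num) (by norm_num) k

lemma dyadicBlock_of_diam_zero {α : ℝ} {B : ℕ → Set (Euc d)}
    (h : ∀ j, EMetric.diam (B j) = 0) (k : ℤ) : dyadicBlock α B k = 0 := by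
  rw [dyadicBlock]
  refine ENNReal.tsum_eq_zero |>.2 fun j => ?_
  rw [h j]
  apply Set.indicator_of_notMem
  intro hc
  simpa using lt_of_lt_of_le (two_zpow_pos (-k-1)) hc.1

end NHaux

namespace NHaux

variable {d : ℕ}

lemma indicator_zero (α : ℝ) (k : ℤ) :
    (Set.Ico ((2 : ℝ≥0∞) ^ (-k - 1)) ((2 : ℝ≥0∞) ^ (-k))).indicator (fun t => t ^ α) 0 = 0 := by
  apply Set.indicator_of_notMem
  intro hc
  simpa using lt_of_lt_of_le (two_zpow_pos (-k-1)) hc.1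

lemma dyadicBlock_split (α : ℝ) (B : ℕ → Set (Euc d)) (p : ℕ → Prop) [DecidablePred p] (k : ℤ) :
    dyadicBlock α B k =
      dyadicBlock α (fun j => if p j then B j else ∅) k +
      dyadicBlock α (fun j => if p j then ∅ else B j) k := by
  rw [dyadicBlock, dyadicBlock, dyadicBlock, ← ENNReal.tsum_add]
  refine tsum_congr fun j => ?_
  by_cases h : p j <;> simp [h, EMetric.diam_empty, EMetric.diam, indicator_zero]

lemma cost_split_ge {α q : ℝ} (hq : 1 ≤ q) (B B₁ B₂ : ℕ → Set (Euc d))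
    (h : ∀ k, dyadicBlock α B k = dyadicBlock α B₁ k + dyadicBlock α B₂ k) :
    cost α q B₁ + cost α q B₂ ≤ cost α q B := by
  rw [cost, cost, cost, ← ENNReal.tsum_add]
  refine ENNReal.tsum_le_tsum fun k => ?_
  rw [h k]
  exact ENNReal.add_rpow_le_rpow_add _ _ hq

lemma covInf_union_ge {α q : ℝ} (hq : 1 ≤ q) {A₁ A₂ : Set (Euc d)} {r δ : ℝ≥0∞}
    (hr : ∀ x ∈ A₁, ∀ y ∈ A₂, r ≤ edist x y) (hδ : 0 < δ) (hδr : δ ≤ r) :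
    covInf α q δ A₁ + covInf α q δ A₂ ≤ covInf α q δ (A₁ ∪ A₂) := by
  classical
  refine le_iInf₂ fun B hB => le_iInf fun hd => ?_
  set B₁ : ℕ → Set (Euc d) := fun j => if (B j ∩ A₁).Nonempty then B j else ∅ with hB₁
  set B₂ : ℕ → Set (Euc d) := fun j => if (B j ∩ A₁).Nonempty then ∅ else B j with hB₂
  have h₁ : A₁ ⊆ ⋃ j, B₁ j := by
    intro x hx
    obtain ⟨j, hj⟩ := mem_iUnion.1 (hB (Or.inl hx))
    refine mem_iUnion.2 ⟨j, ?_⟩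
    have hpos : (B j ∩ A₁).Nonempty := ⟨x, hj, hx⟩
    simp only [hB₁]
    rw [if_pos hpos]
    exact hj
  have h₂ : A₂ ⊆ ⋃ j, B₂ j := by
    intro x hx
    obtain ⟨j, hj⟩ := mem_iUnion.1 (hB (Or.inr hx))
    refine mem_iUnion.2 ⟨j, ?_⟩
    have hne : ¬ (B j ∩ A₁).Nonempty := by
      rintro ⟨y, hyB, hyA⟩
      have h1 : r ≤ edist y x := hr y hyA x hx
      have h2 : edist y x ≤ EMetric.diam (B j) := EMetric.edist_le_diam_of_mem hyB hj
      exact absurd (lt_of_le_of_lt (h1.trans h2) (lt_of_lt_of_le (hd j) hδr)) (lt_irrefl _)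
    simp only [hB₂]
    rw [if_neg hne]
    exact hj
  have hd₁ : ∀ j, EMetric.diam (B₁ j) < δ := fun j => by
    by_cases h : (B j ∩ A₁).Nonempty <;> simp [hB₁, h, hd j, hδ, show EMetric.diam (∅ : Set (Euc d)) = 0 from Metric.ediam_empty]
  have hd₂ : ∀ j, EMetric.diam (B₂ j) < δ := fun j => by
    by_cases h : (B j ∩ A₁).Nonempty <;> simp [hB₂, h, hd j, hδ, show EMetric.diam (∅ : Set (Euc d)) = 0 from Metric.ediam_empty]
  calc covInf α q δ A₁ + covInf α q δ A₂
      ≤ cost α q B₁ + cost α q B₂ := by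
        gcongr
        · exact iInf₂_le_of_le B₁ h₁ (iInf_le_of_le hd₁ le_rfl)
        · exact iInf₂_le_of_le B₂ h₂ (iInf_le_of_le hd₂ le_rfl)
    _ ≤ cost α q B := cost_split_ge hq B B₁ B₂ (dyadicBlock_split α B _)

lemma NHfin_union_ge {α q : ℝ} (hq : 1 ≤ q) {A₁ A₂ : Set (Euc d)} {r : ℝ≥0∞} (hr0 : 0 < r)
    (hr : ∀ x ∈ A₁, ∀ y ∈ A₂, r ≤ edist x y) :
    NHfin d α q A₁ + NHfin d α q A₂ ≤ NHfin d α q (A₁ ∪ A₂) := by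
  rw [NHfin_eq, NHfin_eq]
  refine ENNReal.biSup_add_biSup_le' (p := fun δ : ℝ≥0∞ => 0 < δ) (q := fun δ : ℝ≥0∞ => 0 < δ)
    ⟨1, one_pos⟩ ⟨1, one_pos⟩ fun δ₁ h₁ δ₂ h₂ => ?_
  set δ := min (min δ₁ δ₂) r with hδdef
  have hδ : 0 < δ := lt_min (lt_min h₁ h₂) hr0
  calc covInf α q δ₁ A₁ + covInf α q δ₂ A₂
      ≤ covInf α q δ A₁ + covInf α q δ A₂ := by
        gcongr
        · exact covInf_anti α q A₁ (le_trans (min_le_left _ _) (min_le_left _ _))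
        · exact covInf_anti α q A₂ (le_trans (min_le_left _ _) (min_le_right _ _))
    _ ≤ covInf α q δ (A₁ ∪ A₂) := covInf_union_ge hq hr hδ (min_le_right _ _)
    _ ≤ NHfin d α q (A₁ ∪ A₂) := covInf_le_NHfin α q hδ _

end NHaux

namespace NHaux

variable {d : ℕ}

/-- pointwise weighted splitting inequality -/
lemma rpow_add_le_weight {q : ℝ} (hq0 : 0 ≤ q) {θ : ℝ≥0∞} (hθ0 : θ ≠ 0) (hθt : θ ≠ ∞)
    (x y : ℝ≥0∞) :
    (x + y) ^ q ≤ (1 + θ⁻¹) ^ q * x ^ q + (1 + θ) ^ q * y ^ q := by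
  rcases le_total x (θ * y) with h | h
  · have h1 : x + y ≤ (1 + θ) * y := by
      rw [add_mul, one_mul]
      exact add_le_add h le_rfl |>.trans (by rw [add_comm])
    calc (x + y) ^ q ≤ ((1 + θ) * y) ^ q := ENNReal.rpow_le_rpow h1 hq0
      _ = (1 + θ) ^ q * y ^ q := ENNReal.mul_rpow_of_nonneg _ _ hq0
      _ ≤ _ := le_add_left le_rfl
  · have hy : y ≤ θ⁻¹ * x := by
      rw [← ENNReal.div_eq_inv_mul]
      exact (ENNReal.le_div_iff_mul_le (Or.inl hθ0) (Or.inl hθt)).2 (by rwa [mul_comm])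
    have h1 : x + y ≤ (1 + θ⁻¹) * x := by
      rw [add_mul, one_mul]
      exact add_le_add le_rfl hy
    calc (x + y) ^ q ≤ ((1 + θ⁻¹) * x) ^ q := ENNReal.rpow_le_rpow h1 hq0
      _ = (1 + θ⁻¹) ^ q * x ^ q := ENNReal.mul_rpow_of_nonneg _ _ hq0
      _ ≤ _ := le_add_right le_rfl

/-- tail of a convergent `ℤ`-indexed sum is small -/
lemma exists_tail_le {f : ℤ → ℝ≥0∞} (hf : ∑' k, f k ≠ ∞) {ε : ℝ≥0∞} (hε : 0 < ε) :
    ∃ K : ℤ, ∑' k : ℤ, (if K ≤ k then f k else 0) ≤ ε := by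
  classical
  have h := ENNReal.tendsto_tsum_compl_atTop_zero hf
  have h2 : ∀ᶠ s : Finset ℤ in Filter.atTop, ∑' k : {x : ℤ // x ∉ s}, f k < ε :=
    h.eventually_lt_const hε
  obtain ⟨s, hs⟩ := h2.exists
  by_cases hne : s.Nonempty
  · refine ⟨s.max' hne + 1, ?_⟩
    have hpt : ∀ k : ℤ, (if s.max' hne + 1 ≤ k then f k else 0)
        ≤ Set.indicator {x : ℤ | x ∉ s} f k := by
      intro k
      by_cases hk : s.max' hne + 1 ≤ k
      · rw [if_pos hk, Set.indicator_of_mem]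
        intro hks
        exact absurd (s.le_max' k hks) (by omega)
      · rw [if_neg hk]; exact zero_le
    calc ∑' k : ℤ, (if s.max' hne + 1 ≤ k then f k else 0)
        ≤ ∑' k : ℤ, Set.indicator {x : ℤ | x ∉ s} f k := ENNReal.tsum_le_tsum hpt
      _ = ∑' k : {x : ℤ // x ∉ s}, f k := by
          rw [← tsum_subtype]; rfl
      _ ≤ ε := hs.le
  · refine ⟨0, ?_⟩
    rw [Finset.not_nonempty_iff_eq_empty] at hne
    subst hne
    calc ∑' k : ℤ, (if (0:ℤ) ≤ k then f k else 0)
        ≤ ∑' k : ℤ, Set.indicator {x : ℤ | x ∉ (∅ : Finset ℤ)} f k := by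
          refine ENNReal.tsum_le_tsum fun k => ?_
          by_cases hk : (0:ℤ) ≤ k
          · rw [if_pos hk, Set.indicator_of_mem (by simp)]
          · rw [if_neg hk]; exact zero_le
      _ = ∑' k : {x : ℤ // x ∉ (∅ : Finset ℤ)}, f k := by rw [← tsum_subtype]; rfl
      _ ≤ ε := hs.le

/-- monotone convergence for `⨆` through `tsum` -/
lemma tsum_iSup_of_monotone {ι : Type*} (g : ℕ → ι → ℝ≥0∞) (hg : ∀ k, Monotone fun n => g n k) :
    ∑' k : ι, ⨆ n, g n k = ⨆ n, ∑' k : ι, g n k := by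
  rw [ENNReal.tsum_eq_iSup_sum]
  have he : ∀ n, ∑' k : ι, g n k = ⨆ s : Finset ι, ∑ k ∈ s, g n k :=
    fun n => ENNReal.tsum_eq_iSup_sum
  simp_rw [he]
  rw [iSup_comm]
  refine iSup_congr fun s => ?_
  exact (ENNReal.finsetSum_iSup_of_monotone (f := fun k n => g n k) fun k => hg k)

/-- `rpow` commutes with monotone suprema -/
lemma iSup_rpow_of_monotone {q : ℝ} (hq0 : 0 < q) (a : ℕ → ℝ≥0∞) (ha : Monotone a) :
    (⨆ n, a n) ^ q = ⨆ n, a n ^ q := by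
  have hmono : Monotone fun n => a n ^ q := fun m n h => ENNReal.rpow_le_rpow (ha h) hq0.le
  refine tendsto_nhds_unique ?_ (tendsto_atTop_iSup hmono)
  have h1 : Filter.Tendsto a Filter.atTop (nhds (⨆ n, a n)) := tendsto_atTop_iSup ha
  exact (ENNReal.continuous_rpow_const.tendsto _).comp h1

/-- blocks vanish below the scale of a fine cover -/
lemma dyadicBlock_eq_zero_of_fine {α : ℝ} {B : ℕ → Set (Euc d)} {K k : ℤ}
    (h : ∀ j, EMetric.diam (B j) < 2 ^ (-K)) (hk : k < K) : dyadicBlock α B k = 0 := by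
  rw [dyadicBlock]
  refine (ENNReal.tsum_eq_zero).2 fun j => ?_
  apply Set.indicator_of_notMem
  intro hc
  have h1 : (2 : ℝ≥0∞) ^ (-K) ≤ 2 ^ (-k - 1) := ENNReal.zpow_le_of_le one_le_two (by omega)
  exact absurd (lt_of_le_of_lt (h1.trans hc.1) (h j)) (lt_irrefl _)

end NHaux

namespace NHaux

variable {d : ℕ}

lemma tsum_if_split {ι : Type*} (p : ι → Prop) [DecidablePred p] (f : ι → ℝ≥0∞) :
    ∑' k, f k = (∑' k, if p k then f k else 0) + ∑' k, if p k then 0 else f k := by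
  rw [← ENNReal.tsum_add]
  exact tsum_congr fun k => by by_cases h : p k <;> simp [h]

lemma NHfin_empty (α q : ℝ) (hq : 1 ≤ q) : NHfin d α q (∅ : Set (Euc d)) = 0 := by
  rw [NHfin_eq]
  refine le_antisymm (iSup₂_le fun δ hδ => ?_) (zero_le)
  have h1 : covInf α q δ (∅ : Set (Euc d)) ≤ cost α q (fun _ => (∅ : Set (Euc d))) :=
    iInf₂_le_of_le _ (by simp)
      (iInf_le_of_le (fun j => by simpa [EMetric.diam_empty, EMetric.diam] using hδ) le_rfl)
  refine h1.trans ?_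
  have hb : ∀ k, dyadicBlock α (fun _ => (∅ : Set (Euc d))) k = 0 :=
    dyadicBlock_of_diam_zero (by simp [EMetric.diam])
  simp [cost, hb, ENNReal.zero_rpow_of_pos (lt_of_lt_of_le one_pos hq)]

lemma half_pow_add_half_pow (n : ℕ) :
    (2⁻¹ : ℝ≥0∞) ^ (n + 1) + (2⁻¹ : ℝ≥0∞) ^ (n + 1) = (2⁻¹ : ℝ≥0∞) ^ n := by
  rw [← two_mul, pow_succ, ← mul_assoc, mul_comm (2:ℝ≥0∞), mul_assoc,
    ENNReal.mul_inv_cancel two_ne_zero ENNReal.ofNat_ne_top, mul_one]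

lemma sum_half_pow_le_one (N : ℕ) : ∑ m ∈ Finset.range N, (2⁻¹ : ℝ≥0∞) ^ (m + 1) ≤ 1 := by
  have key : ∀ N : ℕ, ∑ m ∈ Finset.range N, (2⁻¹ : ℝ≥0∞) ^ (m + 1) + (2⁻¹ : ℝ≥0∞) ^ N = 1 := by
    intro N
    induction N with
    | zero => simp
    | succ n ih =>
      rw [Finset.sum_range_succ, add_assoc, half_pow_add_half_pow, ih]
  calc ∑ m ∈ Finset.range N, (2⁻¹ : ℝ≥0∞) ^ (m + 1)
      ≤ ∑ m ∈ Finset.range N, (2⁻¹ : ℝ≥0∞) ^ (m + 1) + (2⁻¹ : ℝ≥0∞) ^ N := le_add_right le_rfl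
    _ = 1 := key N

/-- key step estimate -/
lemma step_estimate {q : ℝ} (hq0 : 0 ≤ q) {θ : ℝ≥0∞} (hθ0 : θ ≠ 0) (hθt : θ ≠ ∞)
    (C D : ℤ → ℝ≥0∞) (K : ℤ) (hD : ∀ k < K, D k = 0) :
    ∑' k, (C k + D k) ^ q ≤ (∑' k, (C k) ^ q)
      + (1 + θ⁻¹) ^ q * (∑' k, if K ≤ k then (C k) ^ q else 0)
      + (1 + θ) ^ q * (∑' k, (D k) ^ q) := by
  classical
  rw [tsum_if_split (fun k => K ≤ k) (fun k => (C k + D k) ^ q)]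
  have h1 : (∑' k, if K ≤ k then (C k + D k) ^ q else 0)
      ≤ (1 + θ⁻¹) ^ q * (∑' k, if K ≤ k then (C k) ^ q else 0)
        + (1 + θ) ^ q * (∑' k, (D k) ^ q) := by
    have hpt : ∀ k : ℤ, (if K ≤ k then (C k + D k) ^ q else 0)
        ≤ (if K ≤ k then (1 + θ⁻¹) ^ q * (C k) ^ q else 0) + (1 + θ) ^ q * (D k) ^ q := by
      intro k
      by_cases hk : K ≤ k
      · rw [if_pos hk, if_pos hk]
        exact rpow_add_le_weight hq0 hθ0 hθt (C k) (D k)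
      · rw [if_neg hk, if_neg hk, zero_add]
        exact zero_le
    calc (∑' k, if K ≤ k then (C k + D k) ^ q else 0)
        ≤ (∑' k, ((if K ≤ k then (1 + θ⁻¹) ^ q * (C k) ^ q else 0) + (1 + θ) ^ q * (D k) ^ q)) :=
          ENNReal.tsum_le_tsum hpt
      _ = (∑' k, if K ≤ k then (1 + θ⁻¹) ^ q * (C k) ^ q else 0)
          + (∑' k, (1 + θ) ^ q * (D k) ^ q) := ENNReal.tsum_add
      _ = (1 + θ⁻¹) ^ q * (∑' k, if K ≤ k then (C k) ^ q else 0)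
          + (1 + θ) ^ q * (∑' k, (D k) ^ q) := by
          rw [ENNReal.tsum_mul_left]
          congr 1
          rw [← ENNReal.tsum_mul_left]
          exact tsum_congr fun k => by by_cases hk : K ≤ k <;> simp [hk]
  have h2 : (∑' k, if K ≤ k then 0 else (C k + D k) ^ q) ≤ ∑' k, (C k) ^ q := by
    refine ENNReal.tsum_le_tsum fun k => ?_
    by_cases hk : K ≤ k
    · rw [if_pos hk]; exact zero_le
    · rw [if_neg hk, hD k (by omega), add_zero]
  calc (∑' k, if K ≤ k then (C k + D k) ^ q else 0)
        + (∑' k, if K ≤ k then 0 else (C k + D k) ^ q)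
      ≤ ((1 + θ⁻¹) ^ q * (∑' k, if K ≤ k then (C k) ^ q else 0)
          + (1 + θ) ^ q * (∑' k, (D k) ^ q)) + (∑' k, (C k) ^ q) := add_le_add h1 h2
    _ = _ := by ring

end NHaux

namespace NHaux

variable {d : ℕ}

/-- interleaving of countably many covers into a single cover -/
def combine (Bs : ℕ → ℕ → Set (Euc d)) : ℕ → Set (Euc d) :=
  fun j => Bs ((Denumerable.eqv (ℕ × ℕ)).symm j).1 ((Denumerable.eqv (ℕ × ℕ)).symm j).2

lemma combine_covers {A : ℕ → Set (Euc d)} {Bs : ℕ → ℕ → Set (Euc d)}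
    (h : ∀ n, A n ⊆ ⋃ j, Bs n j) : (⋃ n, A n) ⊆ ⋃ j, combine Bs j := by
  intro x hx
  obtain ⟨n, hn⟩ := mem_iUnion.1 hx
  obtain ⟨m, hm⟩ := mem_iUnion.1 (h n hn)
  refine mem_iUnion.2 ⟨Denumerable.eqv (ℕ × ℕ) (n, m), ?_⟩
  simpa [combine, Equiv.symm_apply_apply] using hm

lemma combine_diam {Bs : ℕ → ℕ → Set (Euc d)} {δ : ℝ≥0∞}
    (h : ∀ n j, EMetric.diam (Bs n j) < δ) : ∀ j, EMetric.diam (combine Bs j) < δ :=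
  fun _ => h _ _

lemma dyadicBlock_combine (α : ℝ) (Bs : ℕ → ℕ → Set (Euc d)) (k : ℤ) :
    dyadicBlock α (combine Bs) k = ∑' n, dyadicBlock α (Bs n) k := by
  set g : ℕ × ℕ → ℝ≥0∞ := fun p =>
    (Set.Ico ((2 : ℝ≥0∞) ^ (-k - 1)) ((2 : ℝ≥0∞) ^ (-k))).indicator
      (fun t => t ^ α) (EMetric.diam (Bs p.1 p.2)) with hg
  calc dyadicBlock α (combine Bs) k
      = ∑' j : ℕ, g ((Denumerable.eqv (ℕ × ℕ)).symm j) := rfl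
    _ = ∑' p : ℕ × ℕ, g p := Equiv.tsum_eq _ g
    _ = ∑' (n : ℕ) (m : ℕ), g (n, m) := ENNReal.tsum_prod'
    _ = ∑' n, dyadicBlock α (Bs n) k := rfl

lemma cum_monotone (α : ℝ) (Bs : ℕ → ℕ → Set (Euc d)) (k : ℤ) :
    Monotone fun N => ∑ m ∈ Finset.range (N + 1), dyadicBlock α (Bs m) k :=
  fun _ _ h => Finset.sum_le_sum_of_subset (Finset.range_subset_range.2 (by omega))

lemma cost_combine_le {α q : ℝ} (hq0 : 0 < q) (Bs : ℕ → ℕ → Set (Euc d)) {M : ℝ≥0∞}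
    (h : ∀ N, (∑' k : ℤ, (∑ m ∈ Finset.range (N + 1), dyadicBlock α (Bs m) k) ^ q) ≤ M) :
    cost α q (combine Bs) ≤ M := by
  have h1 : ∀ k : ℤ, dyadicBlock α (combine Bs) k ^ q
      = ⨆ N, (∑ m ∈ Finset.range (N + 1), dyadicBlock α (Bs m) k) ^ q := by
    intro k
    rw [dyadicBlock_combine,
      ENNReal.tsum_eq_iSup_nat' (f := fun n => dyadicBlock α (Bs n) k)
        (Filter.tendsto_add_atTop_nat 1)]
    exact iSup_rpow_of_monotone hq0 _ (cum_monotone α Bs k)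
  rw [cost]
  simp_rw [h1]
  rw [tsum_iSup_of_monotone _
    (fun k _ _ hmn => ENNReal.rpow_le_rpow (cum_monotone α Bs k hmn) hq0.le)]
  exact iSup_le h

end NHaux

namespace NHaux

variable {d : ℕ}

/-- state invariant for the recursive construction -/
abbrev GoodSt (d : ℕ) (α q : ℝ) (A : ℕ → Set (Euc d)) (δ : ℝ≥0∞) (eps : ℕ → ℝ≥0∞)
    (R : ℕ → ℝ≥0∞) (c' : ℝ≥0∞) (n : ℕ) (Bs : ℕ → ℕ → Set (Euc d)) (K : ℤ) : Prop :=
  (∀ m ≤ n, A m ⊆ ⋃ j, Bs m j) ∧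
  (∀ m ≤ n, ∀ j, EMetric.diam (Bs m j) < δ) ∧
  ((∑' k : ℤ, (∑ m ∈ Finset.range (n+1), dyadicBlock α (Bs m) k) ^ q) + eps n ≤ R n) ∧
  ((∑' k : ℤ, if K ≤ k then (∑ m ∈ Finset.range (n+1), dyadicBlock α (Bs m) k) ^ q else 0)
      ≤ eps (n+1) / c')

lemma NHfin_key {α q : ℝ} (hq : 1 ≤ q) (A : ℕ → Set (Euc d))
    (hfin : ∀ n, NHfin d α q (A n) ≠ ⊤)
    (hS : (∑' n, NHfin d α q (A n)) ≠ ⊤)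
    {θ η : ℝ≥0∞} (hθ0 : θ ≠ 0) (hθt : θ ≠ ⊤) (hη0 : η ≠ 0) (hηt : η ≠ ⊤) :
    NHfin d α q (⋃ n, A n)
      ≤ (1 + θ) ^ q * ((∑' n, NHfin d α q (A n)) + η) + 2 * η := by
  classical
  have hq0 : (0:ℝ) < q := lt_of_lt_of_le one_pos hq
  set S := ∑' n, NHfin d α q (A n) with hSdef
  set c := (1 + θ) ^ q with hcdef
  set c' := (1 + θ⁻¹) ^ q with hc'def
  have hc1 : 1 ≤ c := ENNReal.one_le_rpow le_self_add hq0
  have hct : c ≠ ⊤ := ENNReal.rpow_ne_top_of_nonneg hq0.le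
    (ENNReal.add_ne_top.2 ⟨ENNReal.one_ne_top, hθt⟩)
  have hc'0 : c' ≠ 0 := (lt_of_lt_of_le one_pos (ENNReal.one_le_rpow le_self_add hq0)).ne'
  have hc't : c' ≠ ⊤ := ENNReal.rpow_ne_top_of_nonneg hq0.le
    (ENNReal.add_ne_top.2 ⟨ENNReal.one_ne_top, ENNReal.inv_ne_top.2 hθ0⟩)
  set eps : ℕ → ℝ≥0∞ := fun n => η * 2⁻¹ ^ n with hepsdef
  have heps0 : ∀ n, eps n ≠ 0 := fun n =>
    mul_ne_zero hη0 (pow_ne_zero n (ENNReal.inv_ne_zero.2 ENNReal.ofNat_ne_top))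
  have heps_add : ∀ n, eps (n+1) + eps (n+1) = eps n := fun n => by
    rw [hepsdef]; dsimp only; rw [← mul_add, half_pow_add_half_pow]
  have hsum_eps : ∀ N : ℕ, (∑ m ∈ Finset.range N, eps (m+1)) ≤ η := fun N => by
    rw [hepsdef]; dsimp only
    rw [← Finset.mul_sum]
    calc η * ∑ m ∈ Finset.range N, (2⁻¹:ℝ≥0∞) ^ (m+1) ≤ η * 1 := by
          gcongr; exact sum_half_pow_le_one N
      _ = η := mul_one η
  set R : ℕ → ℝ≥0∞ := fun n =>
    c * (∑ m ∈ Finset.range (n+1), (NHfin d α q (A m) + eps (m+1))) + 2 * η with hRdef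
  have hRM : ∀ n, R n ≤ c * (S + η) + 2 * η := by
    intro n
    rw [hRdef]; dsimp only
    gcongr
    rw [Finset.sum_add_distrib]
    exact add_le_add (ENNReal.sum_le_tsum _) (hsum_eps (n+1))
  have hM : c * (S + η) + 2 * η ≠ ⊤ :=
    ENNReal.add_ne_top.2 ⟨ENNReal.mul_ne_top hct (ENNReal.add_ne_top.2 ⟨hS, hηt⟩),
      ENNReal.mul_ne_top (by simp) hηt⟩
  rw [NHfin_le_iff]
  intro δ hδ
  -- base state
  have base : ∃ st : (ℕ → ℕ → Set (Euc d)) × ℤ, GoodSt d α q A δ eps R c' 0 st.1 st.2 := by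
    obtain ⟨B₀, hB₀cov, hB₀diam, hB₀cost⟩ :=
      exists_cover (lt_of_le_of_lt (covInf_le_NHfin α q hδ (A 0))
        (ENNReal.lt_add_right (hfin 0) (heps0 1)))
    have hT0 : (∑' k : ℤ, (∑ m ∈ Finset.range (0+1), dyadicBlock α ((fun _ : ℕ => B₀) m) k) ^ q)
        = cost α q B₀ := by
      rw [cost]; exact tsum_congr fun k => by rw [Finset.sum_range_one]
    have hbnd : (∑' k : ℤ, (∑ m ∈ Finset.range (0+1),
          dyadicBlock α ((fun _ : ℕ => B₀) m) k) ^ q) + eps 0 ≤ R 0 := by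
      rw [hT0, hRdef]; dsimp only
      rw [Finset.sum_range_one]
      calc cost α q B₀ + eps 0
          ≤ (NHfin d α q (A 0) + eps 1) + eps 0 := add_le_add hB₀cost.le le_rfl
        _ ≤ c * (NHfin d α q (A 0) + eps (0+1)) + 2 * η := by
            refine add_le_add (le_mul_of_one_le_left (zero_le) hc1) ?_
            rw [hepsdef]; dsimp only
            rw [pow_zero, mul_one, two_mul]
            exact le_add_self
    have hT0fin : (∑' k : ℤ, (∑ m ∈ Finset.range (0+1),
        dyadicBlock α ((fun _ : ℕ => B₀) m) k) ^ q) ≠ ⊤ :=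
      ne_top_of_le_ne_top hM ((le_add_right le_rfl).trans (hbnd.trans (hRM 0)))
    obtain ⟨K₀, hK₀⟩ := exists_tail_le hT0fin (ENNReal.div_pos (heps0 1) hc't)
    refine ⟨(fun _ => B₀, K₀), ?_, ?_, hbnd, hK₀⟩
    · intro m hm
      interval_cases m
      exact hB₀cov
    · intro m hm j
      interval_cases m
      exact hB₀diam j
  -- recursion step
  have step : ∀ (n : ℕ) (st : (ℕ → ℕ → Set (Euc d)) × ℤ),
      GoodSt d α q A δ eps R c' n st.1 st.2 →
      ∃ st' : (ℕ → ℕ → Set (Euc d)) × ℤ, GoodSt d α q A δ eps R c' (n+1) st'.1 st'.2 ∧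
        ∀ m ≤ n, st'.1 m = st.1 m := by
    rintro n ⟨Bs, K⟩ ⟨hcov, hdiam, hbnd, htail⟩
    set δ' := min δ (2 ^ (-K)) with hδ'def
    have hδ' : 0 < δ' := lt_min hδ (two_zpow_pos _)
    obtain ⟨Cv, hCcov, hCdiam, hCcost⟩ :=
      exists_cover (lt_of_le_of_lt (covInf_le_NHfin α q hδ' (A (n+1)))
        (ENNReal.lt_add_right (hfin (n+1)) (heps0 (n+2))))
    set Bs' := Function.update Bs (n+1) Cv with hBs'def
    have hBs'old : ∀ m, m ≤ n → Bs' m = Bs m := fun m hm =>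
      Function.update_of_ne (by omega) _ _
    have hBs'new : Bs' (n+1) = Cv := Function.update_self _ _ _
    set cum : ℤ → ℝ≥0∞ := fun k => ∑ m ∈ Finset.range (n+1), dyadicBlock α (Bs m) k with hcum
    have hcum' : ∀ k, (∑ m ∈ Finset.range (n+2), dyadicBlock α (Bs' m) k)
        = cum k + dyadicBlock α Cv k := by
      intro k
      rw [Finset.sum_range_succ]
      congr 1
      · exact Finset.sum_congr rfl fun m hm => by
          rw [hBs'old m (Nat.lt_succ_iff.1 (Finset.mem_range.1 hm))]
      · rw [hBs'new]
    have hDzero : ∀ k < K, dyadicBlock α Cv k = 0 := fun k hk =>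
      dyadicBlock_eq_zero_of_fine (fun j => lt_of_lt_of_le (hCdiam j) (min_le_right _ _)) hk
    have hT' : (∑' k : ℤ, (∑ m ∈ Finset.range (n+2), dyadicBlock α (Bs' m) k) ^ q)
        ≤ (∑' k, (cum k) ^ q) + eps (n+1) + c * (NHfin d α q (A (n+1)) + eps (n+2)) := by
      calc (∑' k : ℤ, (∑ m ∈ Finset.range (n+2), dyadicBlock α (Bs' m) k) ^ q)
          = (∑' k, (cum k + dyadicBlock α Cv k) ^ q) :=
            tsum_congr fun k => by rw [hcum' k]
        _ ≤ (∑' k, (cum k) ^ q) + c' * (∑' k, if K ≤ k then (cum k) ^ q else 0)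
              + c * (∑' k, (dyadicBlock α Cv k) ^ q) :=
            step_estimate hq0.le hθ0 hθt cum _ K hDzero
        _ ≤ (∑' k, (cum k) ^ q) + c' * (eps (n+1) / c')
              + c * (NHfin d α q (A (n+1)) + eps (n+2)) := by
            gcongr
            exact hCcost.le
        _ = (∑' k, (cum k) ^ q) + eps (n+1) + c * (NHfin d α q (A (n+1)) + eps (n+2)) := by
            rw [ENNReal.mul_div_cancel hc'0 hc't]
    have hbnd' : (∑' k : ℤ, (∑ m ∈ Finset.range (n+2), dyadicBlock α (Bs' m) k) ^ q)
        + eps (n+1) ≤ R (n+1) := by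
      calc (∑' k : ℤ, (∑ m ∈ Finset.range (n+2), dyadicBlock α (Bs' m) k) ^ q) + eps (n+1)
          ≤ ((∑' k, (cum k) ^ q) + eps (n+1) + c * (NHfin d α q (A (n+1)) + eps (n+2)))
              + eps (n+1) := add_le_add hT' le_rfl
        _ = ((∑' k, (cum k) ^ q) + (eps (n+1) + eps (n+1)))
              + c * (NHfin d α q (A (n+1)) + eps (n+2)) := by ring
        _ = ((∑' k, (cum k) ^ q) + eps n) + c * (NHfin d α q (A (n+1)) + eps (n+2)) := by
            rw [heps_add n]
        _ ≤ R n + c * (NHfin d α q (A (n+1)) + eps (n+2)) := add_le_add hbnd le_rfl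
        _ = R (n+1) := by
            rw [hRdef]; dsimp only
            rw [Finset.sum_range_succ (n := n+1), mul_add]
            ring
    have hT'fin : (∑' k : ℤ, (∑ m ∈ Finset.range (n+2), dyadicBlock α (Bs' m) k) ^ q) ≠ ⊤ :=
      ne_top_of_le_ne_top hM ((le_add_right le_rfl).trans (hbnd'.trans (hRM (n+1))))
    obtain ⟨K', hK'⟩ := exists_tail_le hT'fin (ENNReal.div_pos (heps0 (n+2)) hc't)
    refine ⟨(Bs', K'), ⟨?_, ?_, hbnd', hK'⟩, fun m hm => hBs'old m hm⟩
    · intro m hm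
      show A m ⊆ ⋃ j, Bs' m j
      rcases Nat.lt_or_ge m (n+1) with h | h
      · rw [hBs'old m (by omega)]; exact hcov m (by omega)
      · have hmeq : m = n+1 := by omega
        subst hmeq; rw [hBs'new]; exact hCcov
    · intro m hm j
      show EMetric.diam (Bs' m j) < δ
      rcases Nat.lt_or_ge m (n+1) with h | h
      · rw [hBs'old m (by omega)]; exact hdiam m (by omega) j
      · have hmeq : m = n+1 := by omega
        subst hmeq; rw [hBs'new]
        exact lt_of_lt_of_le (hCdiam j) (min_le_left _ _)
  -- build the sequence of states
  obtain ⟨st0, hst0⟩ := base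
  let seq : ∀ n : ℕ, {st : (ℕ → ℕ → Set (Euc d)) × ℤ // GoodSt d α q A δ eps R c' n st.1 st.2} :=
    fun n => Nat.rec ⟨st0, hst0⟩ (fun n p => ⟨Classical.choose (step n p.1 p.2),
      (Classical.choose_spec (step n p.1 p.2)).1⟩) n
  have hext : ∀ n m, m ≤ n → (seq (n+1)).1.1 m = (seq n).1.1 m := fun n m hm =>
    (Classical.choose_spec (step n (seq n).1 (seq n).2)).2 m hm
  set Bfin : ℕ → ℕ → Set (Euc d) := fun n => (seq n).1.1 n with hBfin
  have hcoh : ∀ n m, m ≤ n → (seq n).1.1 m = Bfin m := by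
    intro n
    induction n with
    | zero =>
      intro m hm
      interval_cases m
      rfl
    | succ n ih =>
      intro m hm
      rcases Nat.lt_or_ge m (n+1) with h | h
      · rw [hext n m (by omega)]; exact ih m (by omega)
      · have hmeq : m = n+1 := by omega
        subst hmeq; rfl
  have hcovf : ∀ n, A n ⊆ ⋃ j, Bfin n j := fun n => (seq n).2.1 n le_rfl
  have hdiamf : ∀ n j, EMetric.diam (Bfin n j) < δ := fun n j => (seq n).2.2.1 n le_rfl j
  have hTn : ∀ N, (∑' k : ℤ, (∑ m ∈ Finset.range (N+1), dyadicBlock α (Bfin m) k) ^ q)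
      ≤ c * (S + η) + 2 * η := by
    intro N
    have h1 := (seq N).2.2.2.1
    have h2 : ∀ k : ℤ, (∑ m ∈ Finset.range (N+1), dyadicBlock α (Bfin m) k)
        = ∑ m ∈ Finset.range (N+1), dyadicBlock α ((seq N).1.1 m) k :=
      fun k => Finset.sum_congr rfl fun m hm => by
        rw [hcoh N m (by exact Nat.lt_succ_iff.1 (Finset.mem_range.1 hm))]
    calc (∑' k : ℤ, (∑ m ∈ Finset.range (N+1), dyadicBlock α (Bfin m) k) ^ q)
        = (∑' k : ℤ, (∑ m ∈ Finset.range (N+1), dyadicBlock α ((seq N).1.1 m) k) ^ q) :=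
          tsum_congr fun k => by rw [h2 k]
      _ ≤ R N := (le_add_right le_rfl).trans h1
      _ ≤ c * (S + η) + 2 * η := hRM N
  exact le_trans (iInf₂_le_of_le (combine Bfin) (combine_covers hcovf)
    (iInf_le_of_le (combine_diam hdiamf) le_rfl)) (cost_combine_le hq0 Bfin hTn)

end NHaux

namespace NHaux

variable {d : ℕ}

lemma NHfin_iUnion_le {α q : ℝ} (hq : 1 ≤ q) (A : ℕ → Set (Euc d)) :
    NHfin d α q (⋃ n, A n) ≤ ∑' n, NHfin d α q (A n) := by
  by_cases hS : (∑' n, NHfin d α q (A n)) = ⊤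
  · rw [hS]; exact le_top
  have hfin : ∀ n, NHfin d α q (A n) ≠ ⊤ :=
    fun n => ne_top_of_le_ne_top hS (ENNReal.le_tsum n)
  have hq0 : (0:ℝ) < q := lt_of_lt_of_le one_pos hq
  set S := ∑' n, NHfin d α q (A n) with hSdef
  refine ENNReal.le_of_forall_pos_le_add fun ε hε _ => ?_
  have hε0 : (ε : ℝ≥0∞) ≠ 0 := ENNReal.coe_ne_zero.2 hε.ne'
  have hε8 : (0:ℝ≥0∞) < (ε : ℝ≥0∞) / 8 := ENNReal.div_pos hε0 (by norm_num)
  set η : ℝ≥0∞ := min 1 ((ε : ℝ≥0∞) / 8) with hηdef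
  have hη0 : η ≠ 0 := (lt_min one_pos hε8).ne'
  have hη1 : η ≤ 1 := min_le_left _ _
  have hηε : η ≤ (ε : ℝ≥0∞) / 8 := min_le_right _ _
  have hηt : η ≠ ⊤ := ne_top_of_le_ne_top ENNReal.one_ne_top hη1
  have hS1t : S + 1 ≠ ⊤ := ENNReal.add_ne_top.2 ⟨hS, ENNReal.one_ne_top⟩
  have hS10 : S + 1 ≠ 0 := by simp
  set ι : ℝ≥0∞ := ((ε : ℝ≥0∞) / 8) * (S + 1)⁻¹ with hιdef
  have hι0 : ι ≠ 0 := mul_ne_zero hε8.ne' (ENNReal.inv_ne_zero.2 hS1t)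
  have hιt : ι ≠ ⊤ := ENNReal.mul_ne_top
    (ENNReal.div_lt_top ENNReal.coe_ne_top (by norm_num)).ne (ENNReal.inv_ne_top.2 hS10)
  have h1ι : (1:ℝ≥0∞) < (1 + ι) ^ (1/q) :=
    ENNReal.one_lt_rpow (ENNReal.lt_add_right ENNReal.one_ne_top hι0) (by positivity)
  set θ : ℝ≥0∞ := (1 + ι) ^ (1/q) - 1 with hθdef
  have hθ0 : θ ≠ 0 := by
    rw [hθdef, Ne, tsub_eq_zero_iff_le]
    exact h1ι.not_ge
  have hθt : θ ≠ ⊤ := ne_top_of_le_ne_top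
    (ENNReal.rpow_ne_top_of_nonneg (by positivity)
      (ENNReal.add_ne_top.2 ⟨ENNReal.one_ne_top, hιt⟩)) tsub_le_self
  have hθc : (1 + θ) ^ q = 1 + ι := by
    rw [hθdef, add_tsub_cancel_of_le h1ι.le, ← ENNReal.rpow_mul,
      one_div_mul_cancel hq0.ne', ENNReal.rpow_one]
  have key := NHfin_key hq A hfin hS hθ0 hθt hη0 hηt
  rw [hθc] at key
  refine key.trans ?_
  have hιS : ι * (S + 1) = (ε : ℝ≥0∞) / 8 := by
    rw [hιdef, mul_assoc, ENNReal.inv_mul_cancel hS10 hS1t, mul_one]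
  calc (1 + ι) * (S + η) + 2 * η
      = ((S + η) + ι * (S + η)) + 2 * η := by rw [add_mul, one_mul]
    _ ≤ ((S + η) + ι * (S + 1)) + 2 * η := by gcongr
    _ = ((S + η) + (ε : ℝ≥0∞) / 8) + 2 * η := by rw [hιS]
    _ ≤ ((S + (ε : ℝ≥0∞) / 8) + (ε : ℝ≥0∞) / 8) + 2 * ((ε : ℝ≥0∞) / 8) := by gcongr
    _ = S + 4 * ((ε : ℝ≥0∞) / 8) := by ring
    _ ≤ S + 8 * ((ε : ℝ≥0∞) / 8) := by gcongr <;> norm_num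
    _ = S + ε := by rw [ENNReal.mul_div_cancel (by norm_num) (by norm_num)]

end NHaux

namespace NHaux

variable {d : ℕ}

/-- the Netrusov--Hausdorff outer measure -/
def NHom (d : ℕ) (α q : ℝ) (hq : 1 ≤ q) : OuterMeasure (Euc d) where
  measureOf := NHfin d α q
  empty := NHfin_empty α q hq
  mono := fun h => NHfin_mono α q h
  iUnion_nat := fun s _ => NHfin_iUnion_le hq s

lemma NHom_apply (α q : ℝ) (hq : 1 ≤ q) (F : Set (Euc d)) :
    NHom d α q hq F = NHfin d α q F := rfl

lemma NHom_isMetric (α q : ℝ) (hq : 1 ≤ q) : (NHom d α q hq).IsMetric := by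
  intro s t hst
  obtain ⟨r, hr0, hr⟩ := hst
  refine le_antisymm (measure_union_le s t) ?_
  exact NHfin_union_ge hq (pos_iff_ne_zero.2 hr0) hr

end NHaux


/-- For `1 ≤ q < ∞`, the Netrusov--Hausdorff outer measure `𝓗_{α,q}` is additive on
positively separated sets, and consequently (by Carathéodory's criterion) every Borel set
is Carathéodory measurable for it. -/
theorem stmt3 (d : ℕ) (α q : ℝ) (hα : 0 < α) (hq : 1 ≤ q) :
    (∀ A₁ A₂ : Set (Euc d),
      (∃ ε : ℝ, 0 < ε ∧ ∀ x ∈ A₁, ∀ y ∈ A₂, ε ≤ dist x y) →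
      NHfin d α q (A₁ ∪ A₂) = NHfin d α q A₁ + NHfin d α q A₂) ∧
    (∀ s : Set (Euc d), MeasurableSet s → ∀ t : Set (Euc d),
      NHfin d α q t = NHfin d α q (t ∩ s) + NHfin d α q (t \ s)) := by
  constructor
  · rintro A₁ A₂ ⟨ε, hε0, hsep⟩
    have hsep' : Metric.AreSeparated A₁ A₂ := by
      refine ⟨ENNReal.ofReal ε, by simp [ENNReal.ofReal_eq_zero, hε0.not_ge], ?_⟩
      intro x hx y hy
      rw [edist_dist]
      exact ENNReal.ofReal_le_ofReal (hsep x hx y hy)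
    exact NHaux.NHom_isMetric (d := d) α q hq A₁ A₂ hsep'
  · intro s hs t
    have hborel : borel (Euc d) ≤ (NHaux.NHom d α q hq).caratheodory :=
      (NHaux.NHom_isMetric (d := d) α q hq).borel_le_caratheodory
    have hs' : MeasurableSet[borel (Euc d)] s := by
      rwa [← BorelSpace.measurable_eq (α := Euc d)]
    exact (OuterMeasure.isCaratheodory_iff (NHaux.NHom d α q hq)).1 (hborel s hs') t
end
end

section
/- Let $1<q\le\infty$, $\alpha>0$, and let $f$ be a regular gauge such that $\int_0^1 (f(t)/t^\alpha)^{q/(q-1)}\,dt/t<\infty$. If $S\subset\mathbb{R}^d$ satisfies $\mathcal{H}_{\alpha,q}(S)<\infty$, then $\Lambda_f(S)=0$; equivalently, $\Lambda_f(S)>0$ implies $\mathcal{H}_{\alpha,q}(S)=\infty$. -/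
open Set MeasureTheory ENNReal

noncomputable section

/-- A regular gauge function: continuous, non-decreasing, vanishing at `0`, nonnegative,
and satisfying `f(cx) ≍ f(x)` for some fixed `c > 1`. -/
def RegularGauge (f : ℝ → ℝ) : Prop :=
  ContinuousOn f (Set.Ici 0) ∧ MonotoneOn f (Set.Ici 0) ∧ f 0 = 0 ∧
    (∀ x ≥ (0:ℝ), 0 ≤ f x) ∧ ∃ c > (1:ℝ), ∃ C > (0:ℝ), ∀ x ≥ (0:ℝ), f (c * x) ≤ C * f x

/-- The generalized (`f`-gauge) Hausdorff measure
`Λ_f(A) = lim_{δ→0} inf { ∑_j f(diam B_j) : A ⊆ ⋃ B_j, diam B_j < δ }`. -/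
def gaugeHausdorff (d : ℕ) (f : ℝ → ℝ) (F : Set (Euc d)) : ℝ≥0∞ :=
  ⨆ (δ : ℝ≥0∞) (_ : 0 < δ),
    ⨅ (B : ℕ → Set (Euc d)) (_ : F ⊆ ⋃ j, B j) (_ : ∀ j, EMetric.diam (B j) < δ),
      ∑' j : ℕ, ENNReal.ofReal (f (EMetric.diam (B j)).toReal)

namespace Stmt8Aux

def wgt (f : ℝ → ℝ) (α : ℝ) (k : ℤ) : ℝ≥0∞ :=
  ENNReal.ofReal (f ((2:ℝ) ^ (-(k:ℝ))) * (2:ℝ) ^ (((k:ℝ) + 1) * α))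


lemma doubling {f : ℝ → ℝ} (hf : RegularGauge f) :
    ∃ C : ℝ, 0 < C ∧ ∀ s t : ℝ, 0 ≤ s → s ≤ t → t ≤ 2 * s → f t ≤ C * f s := by
  obtain ⟨hcont, hmono, hzero, hpos, c, hc, C, hC, hreg⟩ := hf
  obtain ⟨n, hn⟩ : ∃ n : ℕ, (2:ℝ) < c ^ n := pow_unbounded_of_one_lt 2 hc
  have hc0 : (0:ℝ) < c := lt_trans one_pos hc
  have hiter : ∀ m : ℕ, ∀ x : ℝ, 0 ≤ x → f (c ^ m * x) ≤ C ^ m * f x := by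
    intro m
    induction m with
    | zero => intro x hx; simp
    | succ m ih =>
      intro x hx
      have hcx : (0:ℝ) ≤ c ^ m * x := mul_nonneg (pow_nonneg hc0.le m) hx
      have h1 : f (c * (c ^ m * x)) ≤ C * f (c ^ m * x) := hreg _ hcx
      have h2 : C * f (c ^ m * x) ≤ C * (C ^ m * f x) :=
        mul_le_mul_of_nonneg_left (ih x hx) hC.le
      calc f (c ^ (m + 1) * x) = f (c * (c ^ m * x)) := by ring_nf
        _ ≤ C * (C ^ m * f x) := h1.trans h2
        _ = C ^ (m + 1) * f x := by ring
  refine ⟨C ^ n, pow_pos hC n, fun s t hs hst ht2 => ?_⟩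
  have ht0 : (0:ℝ) ≤ t := hs.trans hst
  have hcs : t ≤ c ^ n * s := ht2.trans (mul_le_mul_of_nonneg_right hn.le hs)
  have hmem : c ^ n * s ∈ Set.Ici (0:ℝ) := mul_nonneg (pow_nonneg hc0.le n) hs
  exact (hmono ht0 hmem hcs).trans (hiter n s hs)

lemma ennreal_two_zpow (m : ℤ) : (2:ℝ≥0∞) ^ m = ENNReal.ofReal ((2:ℝ) ^ m) := by
  have h2 : (2:ℝ≥0∞) = ((2:NNReal) : ℝ≥0∞) := rfl
  rw [h2, ← ENNReal.coe_zpow (by norm_num : (2:NNReal) ≠ 0)]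
  have : ((2:ℝ)^m) = (((2:NNReal)^m : NNReal) : ℝ) := by push_cast; ring
  rw [this, ENNReal.ofReal_coe_nnreal]

lemma holder_tsum {p q : ℝ} (hpq : Real.HolderConjugate p q) (a b : ℤ → ℝ≥0∞) :
    ∑' k : ℤ, a k * b k ≤ (∑' k, a k ^ p) ^ (1/p) * (∑' k, b k ^ q) ^ (1/q) := by
  have h := ENNReal.lintegral_mul_le_Lp_mul_Lq (Measure.count : Measure ℤ) hpq
    (Measurable.of_discrete (f := a)).aemeasurable
    (Measurable.of_discrete (f := b)).aemeasurable
  simpa [MeasureTheory.lintegral_count] using h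

lemma tsum_ite_shift (g : ℤ → ℝ≥0∞) (K : ℕ) :
    ∑' k : ℤ, (if (K:ℤ) ≤ k then g k else 0) = ∑' n : ℕ, g ((K:ℤ) + n) := by
  have hinj : Function.Injective (fun n : ℕ => (K:ℤ) + n) := by
    intro a b h; simpa using h
  have hsupp : Function.support (fun k : ℤ => (if (K:ℤ) ≤ k then g k else 0))
      ⊆ Set.range (fun n : ℕ => (K:ℤ) + n) := by
    intro k hk
    simp only [Function.mem_support, ne_eq, ite_eq_right_iff, not_forall] at hk
    obtain ⟨h1, -⟩ := hk
    exact ⟨(k - K).toNat, by show (K:ℤ) + ((k - (K:ℤ)).toNat : ℤ) = k; omega⟩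
  have := Function.Injective.tsum_eq hinj hsupp
  rw [← this]
  refine tsum_congr fun n => ?_
  simp


lemma tsum_wgt_pow_ne_top {f : ℝ → ℝ} (hf : RegularGauge f) {α r : ℝ} (hα : 0 < α) (hr : 0 < r)
    (hI : (∫⁻ t in Set.Ioc (0:ℝ) 1,
        ENNReal.ofReal ((f t / t ^ α) ^ r / t)) < ⊤) :
    ∑' n : ℕ, (wgt f α (n:ℤ)) ^ r ≠ ⊤ := by
  obtain ⟨C, hC0, hdb⟩ := doubling hf
  set g : ℝ → ℝ≥0∞ := fun t => ENNReal.ofReal ((f t / t ^ α) ^ r / t) with hg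
  set c₀ : ℝ≥0∞ := ENNReal.ofReal (2 * ((2:ℝ)^α * C) ^ r) with hc₀
  have key : ∀ n : ℕ, (wgt f α (n:ℤ)) ^ r
      ≤ c₀ * ∫⁻ t in Ioc ((2:ℝ) ^ (-(n:ℝ) - 1)) ((2:ℝ) ^ (-(n:ℝ))), g t := by
    intro n
    set v : ℝ := (2:ℝ) ^ (-(n:ℝ)) with hvdef
    set u : ℝ := (2:ℝ) ^ (-(n:ℝ) - 1) with hudef
    have hv0 : 0 < v := Real.rpow_pos_of_pos two_pos _
    have hu0 : 0 < u := Real.rpow_pos_of_pos two_pos _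
    have huv2 : u = v / 2 := by
      rw [hudef, Real.rpow_sub two_pos, Real.rpow_one, hvdef]
    have fv0 : 0 ≤ f v := hf.2.2.2.1 v hv0.le
    set ε : ℝ := ((f v / C) / v ^ α) ^ r / v with hε
    have hnum0 : 0 ≤ (f v / C) / v ^ α :=
      div_nonneg (div_nonneg fv0 hC0.le) (Real.rpow_nonneg hv0.le _)
    have hε0 : 0 ≤ ε := div_nonneg (Real.rpow_nonneg hnum0 _) hv0.le
    have hpt : ∀ t ∈ Ioc u v, ENNReal.ofReal ε ≤ g t := by
      intro t ht
      obtain ⟨ht1, ht2⟩ := ht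
      have ht0 : 0 < t := hu0.trans ht1
      have hv2t : v ≤ 2 * t := by rw [huv2] at ht1; linarith
      have hfvC : f v ≤ C * f t := hdb t v ht0.le ht2 hv2t
      have hft0 : 0 ≤ f t := hf.2.2.2.1 t ht0.le
      have h1 : f v / C ≤ f t := (div_le_iff₀' hC0).mpr hfvC
      have htα : 0 < t ^ α := Real.rpow_pos_of_pos ht0 _
      have htvα : t ^ α ≤ v ^ α := Real.rpow_le_rpow ht0.le ht2 hα.le
      have h2 : (f v / C) / v ^ α ≤ f t / t ^ α := div_le_div₀ hft0 h1 htα htvα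
      have h3 : ((f v / C) / v ^ α) ^ r ≤ (f t / t ^ α) ^ r :=
        Real.rpow_le_rpow hnum0 h2 hr.le
      have h4 : ε ≤ (f t / t ^ α) ^ r / t := by
        rw [hε]
        calc ((f v / C) / v ^ α) ^ r / v ≤ (f t / t ^ α) ^ r / v := by gcongr
          _ ≤ (f t / t ^ α) ^ r / t := by
              gcongr
              all_goals first
              | exact Real.rpow_nonneg (div_nonneg hft0 htα.le) _
              | skip

      exact ENNReal.ofReal_le_ofReal h4
    have hsub0 : Ioc u v ⊆ Set.Ici (0:ℝ) := fun t ht => (hu0.trans ht.1).le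
    have hcont : ContinuousOn (fun t => (f t / t ^ α) ^ r / t) (Ioc u v) := by
      apply ContinuousOn.div
      · apply ContinuousOn.rpow_const
        · apply ContinuousOn.div (hf.1.mono hsub0)
          · exact ContinuousOn.rpow_const continuousOn_id
              (fun t ht => Or.inl (hu0.trans ht.1).ne')
          · intro t ht; exact (Real.rpow_pos_of_pos (hu0.trans ht.1) _).ne'
        · intro t ht; exact Or.inr hr.le
      · exact continuousOn_id
      · intro t ht; exact (hu0.trans ht.1).ne'
    have hmeas : AEMeasurable g (volume.restrict (Ioc u v)) :=
      (ENNReal.continuous_ofReal.comp_continuousOn hcont).aemeasurable measurableSet_Ioc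
    have hle : ENNReal.ofReal ε * ENNReal.ofReal (v - u) ≤ ∫⁻ t in Ioc u v, g t := by
      have h := mul_meas_ge_le_lintegral₀ hmeas (ENNReal.ofReal ε)
      calc ENNReal.ofReal ε * ENNReal.ofReal (v - u)
          = ENNReal.ofReal ε * volume (Ioc u v) := by rw [Real.volume_Ioc]
        _ ≤ ENNReal.ofReal ε * (volume.restrict (Ioc u v)) {x | ENNReal.ofReal ε ≤ g x} := by
            apply mul_le_mul_right
            rw [← Measure.restrict_apply_self]
            exact measure_mono hpt
        _ ≤ _ := h
    have hvα : v ^ α = (2:ℝ) ^ (-(n:ℝ) * α) := by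
      rw [hvdef, ← Real.rpow_mul (by norm_num : (0:ℝ) ≤ 2)]
    have hbase : (2:ℝ)^α * C * ((f v / C) / v ^ α) = f v * (2:ℝ) ^ (((n:ℝ) + 1) * α) := by
      rw [hvα, show ((n:ℝ) + 1) * α = (n:ℝ) * α + α by ring, Real.rpow_add two_pos,
        show -(n:ℝ) * α = -((n:ℝ) * α) by ring, Real.rpow_neg (by norm_num : (0:ℝ) ≤ 2)]
      have h2nα : ((2:ℝ) ^ ((n:ℝ) * α)) ≠ 0 := (Real.rpow_pos_of_pos two_pos _).ne'
      field_simp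
    have hval : (f v * (2:ℝ) ^ (((n:ℝ) + 1) * α)) ^ r
        = 2 * ((2:ℝ)^α * C) ^ r * (ε * (v - u)) := by
      have hvu : v - u = v / 2 := by rw [huv2]; ring
      have h1 : ε * (v - u) = ((f v / C) / v ^ α) ^ r / 2 := by
        rw [hvu, hε]; field_simp
      rw [h1, ← hbase, Real.mul_rpow (by positivity) hnum0]
      ring
    calc (wgt f α (n:ℤ)) ^ r
        = ENNReal.ofReal ((f v * (2:ℝ) ^ (((n:ℝ) + 1) * α)) ^ r) := by
          rw [wgt]
          push_cast
          rw [← hvdef,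
            ENNReal.ofReal_rpow_of_nonneg (mul_nonneg fv0 (Real.rpow_nonneg two_pos.le _)) hr.le]
      _ = c₀ * (ENNReal.ofReal ε * ENNReal.ofReal (v - u)) := by
          rw [hval, hc₀, ← ENNReal.ofReal_mul hε0,
            ← ENNReal.ofReal_mul
              (by positivity : (0:ℝ) ≤ 2 * ((2:ℝ)^α * C) ^ r)]
      _ ≤ c₀ * ∫⁻ t in Ioc u v, g t := mul_le_mul_right hle _
  -- disjointness
  set I : ℕ → Set ℝ := fun n => Ioc ((2:ℝ) ^ (-(n:ℝ) - 1)) ((2:ℝ) ^ (-(n:ℝ))) with hI'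
  have hkey : ∀ m n : ℕ, m < n → Disjoint (I m) (I n) := by
    intro m n h
    rw [hI', Set.Ioc_disjoint_Ioc]
    have hmn' : (m:ℝ) + 1 ≤ (n:ℝ) := by exact_mod_cast Nat.succ_le_of_lt h
    refine min_le_of_right_le (le_max_of_le_left ?_)
    rw [Real.rpow_le_rpow_left_iff one_lt_two]
    linarith
  have hdisj : Pairwise (Function.onFun Disjoint I) := by
    intro m n hmn
    rcases hmn.lt_or_gt with h | h
    · exact hkey m n h
    · exact (hkey n m h).symm
  have hsub : (⋃ n : ℕ, I n) ⊆ Ioc (0:ℝ) 1 := by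
    intro x hx
    simp only [hI', Set.mem_iUnion, Set.mem_Ioc] at hx
    obtain ⟨n, h1, h2⟩ := hx
    refine ⟨(Real.rpow_pos_of_pos two_pos _).trans h1, h2.trans ?_⟩
    exact Real.rpow_le_one_of_one_le_of_nonpos one_le_two (neg_nonpos.mpr n.cast_nonneg)
  have hfin : ∑' n : ℕ, (wgt f α (n:ℤ)) ^ r ≤ c₀ * ∫⁻ t in Ioc (0:ℝ) 1, g t := by
    calc ∑' n : ℕ, (wgt f α (n:ℤ)) ^ r ≤ ∑' n : ℕ, c₀ * ∫⁻ t in I n, g t :=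
          ENNReal.tsum_le_tsum key
      _ = c₀ * ∑' n : ℕ, ∫⁻ t in I n, g t := ENNReal.tsum_mul_left
      _ ≤ c₀ * ∫⁻ t in Ioc (0:ℝ) 1, g t := by
          apply mul_le_mul_right
          rw [← lintegral_iUnion (fun n => measurableSet_Ioc) hdisj]
          exact lintegral_mono_set hsub
  exact (hfin.trans_lt (ENNReal.mul_lt_top ENNReal.ofReal_lt_top hI)).ne

lemma cover_bound {d : ℕ} {f : ℝ → ℝ} (hf : RegularGauge f) {α : ℝ} (hα : 0 < α)
    (B : ℕ → Set (Euc d)) (K : ℕ) (hB : ∀ j, EMetric.diam (B j) < (2:ℝ≥0∞) ^ (-(K:ℤ))) :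
    ∑' j : ℕ, ENNReal.ofReal (f (EMetric.diam (B j)).toReal)
      ≤ ∑' k : ℤ, (if (K:ℤ) ≤ k then wgt f α k else 0) * dyadicBlock α B k := by
  have hrhs : ∑' k : ℤ, (if (K:ℤ) ≤ k then wgt f α k else 0) * dyadicBlock α B k
      = ∑' j : ℕ, ∑' k : ℤ, (if (K:ℤ) ≤ k then wgt f α k else 0) *
          (Set.Ico ((2 : ℝ≥0∞) ^ (-k - 1)) ((2 : ℝ≥0∞) ^ (-k))).indicator
            (fun t => t ^ α) (EMetric.diam (B j)) := by
    rw [ENNReal.tsum_comm]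
    refine tsum_congr fun k => ?_
    rw [dyadicBlock, ENNReal.tsum_mul_left]
  rw [hrhs]
  refine ENNReal.tsum_le_tsum fun j => ?_
  set D : ℝ≥0∞ := EMetric.diam (B j) with hD
  rcases eq_or_lt_of_le (zero_le : 0 ≤ D) with h0 | h0
  · rw [← h0]
    simp [hf.2.2.1]
  · have hDtop : D ≠ ⊤ := ((hB j).trans_le le_top).ne
    have hDr0 : 0 < D.toReal := ENNReal.toReal_pos h0.ne' hDtop
    obtain ⟨m, hm1, hm2⟩ := exists_mem_Ico_zpow hDr0 one_lt_two
    set k : ℤ := -m - 1 with hk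
    have hDof : D = ENNReal.ofReal D.toReal := (ENNReal.ofReal_toReal hDtop).symm
    have hmem : D ∈ Set.Ico ((2 : ℝ≥0∞) ^ (-k - 1)) ((2 : ℝ≥0∞) ^ (-k)) := by
      constructor
      · rw [ennreal_two_zpow, hDof, show -k - 1 = m by omega]
        exact ENNReal.ofReal_le_ofReal hm1
      · rw [ennreal_two_zpow, hDof, show -k = m + 1 by omega]
        exact (ENNReal.ofReal_lt_ofReal_iff (by positivity)).mpr hm2
    have hKk : (K:ℤ) ≤ k := by
      have h1 : (2:ℝ≥0∞) ^ (-k - 1) < (2:ℝ≥0∞) ^ (-(K:ℤ)) := lt_of_le_of_lt hmem.1 (hB j)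
      rw [ennreal_two_zpow, ennreal_two_zpow,
        ENNReal.ofReal_lt_ofReal_iff (by positivity)] at h1
      have := (zpow_lt_zpow_iff_right₀ (by norm_num : (1:ℝ) < 2)).mp h1
      omega
    -- single term bound
    have hterm : ENNReal.ofReal (f D.toReal)
        ≤ (if (K:ℤ) ≤ k then wgt f α k else 0) *
          (Set.Ico ((2 : ℝ≥0∞) ^ (-k - 1)) ((2 : ℝ≥0∞) ^ (-k))).indicator
            (fun t => t ^ α) D := by
      rw [if_pos hKk, Set.indicator_of_mem hmem]
      have hDle : D.toReal ≤ (2:ℝ) ^ (-(k:ℝ)) := by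
        have : (-(k:ℝ)) = ((m + 1 : ℤ) : ℝ) := by rw [hk]; push_cast; ring
        rw [this, Real.rpow_intCast]
        exact hm2.le
      have h2k0 : (0:ℝ) < (2:ℝ) ^ (-(k:ℝ)) := Real.rpow_pos_of_pos two_pos _
      have hfmono : f D.toReal ≤ f ((2:ℝ) ^ (-(k:ℝ))) :=
        hf.2.1 hDr0.le h2k0.le hDle
      have hlow : (ENNReal.ofReal ((2:ℝ) ^ (-(k:ℝ) - 1))) ^ α ≤ D ^ α := by
        apply ENNReal.rpow_le_rpow _ hα.le
        have : ((2:ℝ) ^ (-(k:ℝ) - 1)) = (2:ℝ) ^ ((-k - 1 : ℤ) : ℝ) := by push_cast; ring_nf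
        rw [this, Real.rpow_intCast, ← ennreal_two_zpow]
        exact hmem.1
      calc ENNReal.ofReal (f D.toReal) ≤ ENNReal.ofReal (f ((2:ℝ) ^ (-(k:ℝ)))) :=
            ENNReal.ofReal_le_ofReal hfmono
        _ = wgt f α k * (ENNReal.ofReal ((2:ℝ) ^ (-(k:ℝ) - 1))) ^ α := by
            rw [wgt, ENNReal.ofReal_rpow_of_nonneg (Real.rpow_nonneg two_pos.le _) hα.le,
              ← ENNReal.ofReal_mul
                (mul_nonneg (hf.2.2.2.1 _ h2k0.le) (Real.rpow_nonneg two_pos.le _))]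
            congr 1
            rw [show ((2:ℝ) ^ (-(k:ℝ) - 1)) ^ α = (2:ℝ) ^ ((-(k:ℝ) - 1) * α) from
                (Real.rpow_mul two_pos.le _ _).symm,
              mul_assoc, ← Real.rpow_add two_pos,
              show ((k:ℝ) + 1) * α + (-(k:ℝ) - 1) * α = 0 by ring, Real.rpow_zero, mul_one]
        _ ≤ wgt f α k * D ^ α := mul_le_mul_right hlow _
    exact hterm.trans (ENNReal.le_tsum k)

lemma gauge_zero_core {d : ℕ} {f : ℝ → ℝ} (S : Set (Euc d)) (T : ℕ → ℝ≥0∞)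
    (hT : Filter.Tendsto T Filter.atTop (nhds 0))
    (hmain : ∀ K : ℕ, ∃ B : ℕ → Set (Euc d), S ⊆ ⋃ j, B j ∧
      (∀ j, EMetric.diam (B j) < (2:ℝ≥0∞) ^ (-(K:ℤ))) ∧
      ∑' j : ℕ, ENNReal.ofReal (f (EMetric.diam (B j)).toReal) ≤ T K) :
    gaugeHausdorff d f S = 0 := by
  rw [gaugeHausdorff]
  simp only [ENNReal.iSup_eq_zero]
  intro δ hδ
  refine le_antisymm ?_ zero_le
  obtain ⟨K₀, hK₀⟩ := ENNReal.exists_inv_two_pow_lt hδ.ne'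
  refine ge_of_tendsto hT ?_
  filter_upwards [Filter.eventually_ge_atTop K₀] with K hK
  obtain ⟨B, hcov, hdiam, hsum⟩ := hmain K
  have h2K : (2:ℝ≥0∞) ^ (-(K:ℤ)) ≤ 2⁻¹ ^ K₀ := by
    have h1 : (2:ℝ≥0∞) ^ (-(K:ℤ)) ≤ (2:ℝ≥0∞) ^ (-(K₀:ℤ)) :=
      ENNReal.zpow_le_of_le one_le_two (by omega)
    have h2 : (2:ℝ≥0∞) ^ (-(K₀:ℤ)) = 2⁻¹ ^ K₀ := by
      rw [ENNReal.zpow_neg, zpow_natCast, ← ENNReal.inv_pow]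
    rw [← h2]; exact h1
  have hlt : ∀ j, EMetric.diam (B j) < δ := fun j =>
    ((hdiam j).trans_le h2K).trans hK₀
  exact le_trans (iInf_le_of_le B (iInf_le_of_le hcov (iInf_le_of_le hlt le_rfl))) hsum


end Stmt8Aux

open Stmt8Aux in
/-- Let `1 < q ≤ ∞`, `α > 0`, and let `f` be a regular gauge with
`∫_0^1 (f(t)/t^α)^{q/(q-1)} dt/t < ∞`. If `𝓗_{α,q}(S) < ∞` then `Λ_f(S) = 0`.
The `q = ∞` case (where `q/(q-1) = 1`) uses the capacity `𝓗_{α,∞}`. -/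
theorem stmt8 (d : ℕ) (α : ℝ) (hα : 0 < α) :
    (∀ (q : ℝ) (f : ℝ → ℝ) (S : Set (Euc d)), 1 < q → RegularGauge f →
      (∫⁻ t in Set.Ioc (0:ℝ) 1,
        ENNReal.ofReal ((f t / t ^ α) ^ (q / (q - 1)) / t)) < ⊤ →
      NHfin d α q S < ⊤ → gaugeHausdorff d f S = 0) ∧
    (∀ (f : ℝ → ℝ) (S : Set (Euc d)), RegularGauge f →
      (∫⁻ t in Set.Ioc (0:ℝ) 1, ENNReal.ofReal ((f t / t ^ α) / t)) < ⊤ →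
      NHinf d α S < ⊤ → gaugeHausdorff d f S = 0) := by
  have hextract : ∀ (K : ℕ) (V : (ℕ → Set (Euc d)) → ℝ≥0∞) (A : ℝ≥0∞) (S : Set (Euc d)),
      (⨆ (δ : ℝ≥0∞) (_ : 0 < δ),
        ⨅ (B : ℕ → Set (Euc d)) (_ : S ⊆ ⋃ j, B j) (_ : ∀ j, EMetric.diam (B j) < δ),
          V B) < A →
      ∃ B : ℕ → Set (Euc d), S ⊆ ⋃ j, B j ∧
        (∀ j, EMetric.diam (B j) < (2:ℝ≥0∞) ^ (-(K:ℤ))) ∧ V B < A := by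
    intro K V A S h
    have hpos : (0:ℝ≥0∞) < (2:ℝ≥0∞) ^ (-(K:ℤ)) :=
      ENNReal.zpow_pos (by norm_num) (by norm_num) _
    have hle : (⨅ (B : ℕ → Set (Euc d)) (_ : S ⊆ ⋃ j, B j)
        (_ : ∀ j, EMetric.diam (B j) < (2:ℝ≥0∞) ^ (-(K:ℤ))), V B) < A :=
      lt_of_le_of_lt (le_iSup₂_of_le ((2:ℝ≥0∞) ^ (-(K:ℤ))) hpos le_rfl) h
    rw [iInf_lt_iff] at hle
    obtain ⟨B, hle⟩ := hle
    rw [iInf_lt_iff] at hle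
    obtain ⟨hcov, hle⟩ := hle
    rw [iInf_lt_iff] at hle
    obtain ⟨hdiam, hval⟩ := hle
    exact ⟨B, hcov, hdiam, hval⟩
  constructor
  · intro q f S hq hf hI hNH
    set p : ℝ := q / (q - 1) with hp
    have hpq : p.HolderConjugate q := (Real.HolderConjugate.conjExponent hq).symm
    set A : ℝ≥0∞ := NHfin d α q S + 1 with hA
    have hAne : A ≠ ⊤ := by
      rw [hA]; exact ENNReal.add_ne_top.mpr ⟨hNH.ne, ENNReal.one_ne_top⟩
    have hW : ∑' n : ℕ, (wgt f α (n:ℤ)) ^ p ≠ ⊤ :=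
      tsum_wgt_pow_ne_top hf hα hpq.pos hI
    have hUt : Filter.Tendsto (fun K : ℕ => ∑' n : ℕ, wgt f α ((K:ℤ) + n) ^ p)
        Filter.atTop (nhds 0) := by
      have h := ENNReal.tendsto_sum_nat_add (fun n : ℕ => wgt f α (n:ℤ) ^ p) hW
      convert h using 2 with K
      refine tsum_congr fun n => ?_
      congr 2
      push_cast; ring
    have hTt : Filter.Tendsto
        (fun K : ℕ => (∑' n : ℕ, wgt f α ((K:ℤ) + n) ^ p) ^ (1/p) * A ^ (1/q))
        Filter.atTop (nhds 0) := by
      have h1 : Filter.Tendsto (fun K : ℕ => (∑' n : ℕ, wgt f α ((K:ℤ) + n) ^ p) ^ (1/p))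
          Filter.atTop (nhds ((0:ℝ≥0∞) ^ (1/p))) :=
        (ENNReal.continuous_rpow_const.tendsto 0).comp hUt
      rw [ENNReal.zero_rpow_of_pos hpq.one_div_pos] at h1
      have h2 : Filter.Tendsto
          (fun K : ℕ => (∑' n : ℕ, wgt f α ((K:ℤ) + n) ^ p) ^ (1/p) * A ^ (1/q))
          Filter.atTop (nhds (0 * A ^ (1/q))) :=
        ENNReal.Tendsto.mul_const h1
          (Or.inr (ENNReal.rpow_ne_top_of_nonneg hpq.symm.one_div_nonneg hAne))
      rw [zero_mul] at h2
      exact h2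
    apply gauge_zero_core S _ hTt
    intro K
    obtain ⟨B, hcov, hdiam, hval⟩ := hextract K _ A S (by
      rw [hA, ← NHfin]
      exact ENNReal.lt_add_right hNH.ne one_ne_zero)
    refine ⟨B, hcov, hdiam, ?_⟩
    calc ∑' j : ℕ, ENNReal.ofReal (f (EMetric.diam (B j)).toReal)
        ≤ ∑' k : ℤ, (if (K:ℤ) ≤ k then wgt f α k else 0) * dyadicBlock α B k :=
          cover_bound hf hα B K hdiam
      _ ≤ (∑' k : ℤ, (if (K:ℤ) ≤ k then wgt f α k else 0) ^ p) ^ (1/p) *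
            (∑' k : ℤ, dyadicBlock α B k ^ q) ^ (1/q) := holder_tsum hpq _ _
      _ ≤ (∑' n : ℕ, wgt f α ((K:ℤ) + n) ^ p) ^ (1/p) * A ^ (1/q) := by
          apply mul_le_mul'
          · apply ENNReal.rpow_le_rpow _ hpq.one_div_nonneg
            have he : ∀ k : ℤ, (if (K:ℤ) ≤ k then wgt f α k else 0) ^ p
                = (if (K:ℤ) ≤ k then wgt f α k ^ p else 0) := by
              intro k; split
              · rfl
              · exact ENNReal.zero_rpow_of_pos hpq.pos
            rw [tsum_congr he, tsum_ite_shift (fun k => wgt f α k ^ p) K]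
          · exact ENNReal.rpow_le_rpow hval.le hpq.symm.one_div_nonneg
  · intro f S hf hI hNH
    set A : ℝ≥0∞ := NHinf d α S + 1 with hA
    have hAne : A ≠ ⊤ := by
      rw [hA]; exact ENNReal.add_ne_top.mpr ⟨hNH.ne, ENNReal.one_ne_top⟩
    have hI' : (∫⁻ t in Set.Ioc (0:ℝ) 1,
        ENNReal.ofReal ((f t / t ^ α) ^ (1:ℝ) / t)) < ⊤ := by
      simpa only [Real.rpow_one] using hI
    have hW : ∑' n : ℕ, wgt f α (n:ℤ) ≠ ⊤ := by
      have := tsum_wgt_pow_ne_top hf hα one_pos hI'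
      simpa only [ENNReal.rpow_one] using this
    have hUt : Filter.Tendsto (fun K : ℕ => ∑' n : ℕ, wgt f α ((K:ℤ) + n))
        Filter.atTop (nhds 0) := by
      have h := ENNReal.tendsto_sum_nat_add (fun n : ℕ => wgt f α (n:ℤ)) hW
      convert h using 2 with K
      refine tsum_congr fun n => ?_
      congr 1
      push_cast; ring
    have hTt : Filter.Tendsto (fun K : ℕ => (∑' n : ℕ, wgt f α ((K:ℤ) + n)) * A)
        Filter.atTop (nhds 0) := by
      have h2 : Filter.Tendsto (fun K : ℕ => (∑' n : ℕ, wgt f α ((K:ℤ) + n)) * A)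
          Filter.atTop (nhds (0 * A)) := ENNReal.Tendsto.mul_const hUt (Or.inr hAne)
      rw [zero_mul] at h2
      exact h2
    apply gauge_zero_core S _ hTt
    intro K
    obtain ⟨B, hcov, hdiam, hval⟩ := hextract K _ A S (by
      rw [hA, ← NHinf]
      exact ENNReal.lt_add_right hNH.ne one_ne_zero)
    refine ⟨B, hcov, hdiam, ?_⟩
    calc ∑' j : ℕ, ENNReal.ofReal (f (EMetric.diam (B j)).toReal)
        ≤ ∑' k : ℤ, (if (K:ℤ) ≤ k then wgt f α k else 0) * dyadicBlock α B k :=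
          cover_bound hf hα B K hdiam
      _ ≤ ∑' k : ℤ, (if (K:ℤ) ≤ k then wgt f α k else 0) * (⨆ k' : ℤ, dyadicBlock α B k') :=
          ENNReal.tsum_le_tsum fun k => mul_le_mul_right (le_iSup _ k) _
      _ = (∑' k : ℤ, (if (K:ℤ) ≤ k then wgt f α k else 0)) * (⨆ k' : ℤ, dyadicBlock α B k') :=
          ENNReal.tsum_mul_right
      _ ≤ (∑' n : ℕ, wgt f α ((K:ℤ) + n)) * A := by
          rw [tsum_ite_shift (fun k => wgt f α k) K]
          exact mul_le_mul' le_rfl hval.le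

end
end

section
/- If a compact set $S\subset\mathbb{R}^d$ has finite $\alpha$-packing pre-measure $\widetilde{\mathcal{P}}_\alpha(S)<\infty$, then for every $q>0$ the Netrusov–Hausdorff capacity $\mathcal{H}_{\alpha,q}(S)$ is finite. Consequently, a set that is $\sigma$-finite for the $\alpha$-packing measure is $\sigma$-finite for $\mathcal{H}_{\alpha,q}$. -/
open Set MeasureTheory ENNReal

noncomputable section

/-- The `α`-packing pre-measure: `lim_{δ→0}` of the supremum of `∑_j (diam B_j)^α` over
finite disjoint collections of open balls centered in `F` with diameters `< δ`. -/
def prePack (d : ℕ) (α : ℝ) (F : Set (Euc d)) : ℝ≥0∞ :=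
  ⨅ (δ : ℝ) (_ : 0 < δ),
    ⨆ (n : ℕ) (x : Fin n → Euc d) (r : Fin n → ℝ)
      (_ : ∀ i, x i ∈ F) (_ : ∀ i, 0 < r i) (_ : ∀ i, 2 * r i < δ)
      (_ : Pairwise fun i j => Disjoint (Metric.ball (x i) (r i)) (Metric.ball (x j) (r j))),
      ∑ i : Fin n, ENNReal.ofReal ((2 * r i) ^ α)

/-- The `α`-packing measure `𝓟_α(F) = inf { ∑_j 𝓟̃_α(B_j) : F ⊆ ⋃ B_j }`. -/
def packMeasure (d : ℕ) (α : ℝ) (F : Set (Euc d)) : ℝ≥0∞ :=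
  ⨅ (B : ℕ → Set (Euc d)) (_ : F ⊆ ⋃ j, B j), ∑' j : ℕ, prePack d α (B j)

/- Auxiliary lemmas -/

lemma two_zpow_lt_iff' {a b : ℤ} : (2:ℝ≥0∞)^a < (2:ℝ≥0∞)^b ↔ a < b := by
  rw [← ENNReal.coe_ofNat, ← ENNReal.coe_zpow (by norm_num), ← ENNReal.coe_zpow (by norm_num),
    ENNReal.coe_lt_coe, zpow_lt_zpow_iff_right₀ (by norm_num : (1:NNReal) < 2)]

lemma two_zpow_le_iff' {a b : ℤ} : (2:ℝ≥0∞)^a ≤ (2:ℝ≥0∞)^b ↔ a ≤ b := by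
  rw [← ENNReal.coe_ofNat, ← ENNReal.coe_zpow (by norm_num), ← ENNReal.coe_zpow (by norm_num),
    ENNReal.coe_le_coe, zpow_le_zpow_iff_right₀ (by norm_num : (1:NNReal) < 2)]

lemma ofReal_two_zpow (z : ℤ) : ENNReal.ofReal ((2:ℝ)^z) = (2:ℝ≥0∞)^z := by
  rw [← Real.rpow_intCast, ← ENNReal.ofReal_rpow_of_pos (by norm_num), ENNReal.rpow_intCast]
  norm_num

lemma two_zpow_pos' (z : ℤ) : (0:ℝ≥0∞) < (2:ℝ≥0∞)^z :=
  ENNReal.zpow_pos (by norm_num) (by norm_num) z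

lemma zero_notin_Ico (k : ℤ) :
    (0:ℝ≥0∞) ∉ Set.Ico ((2 : ℝ≥0∞) ^ (-k - 1)) ((2 : ℝ≥0∞) ^ (-k)) := by
  intro h
  exact absurd h.1 (not_le.mpr (two_zpow_pos' _))

/-- The main lemma: finite packing pre-measure forces finite Netrusov–Hausdorff capacity. -/
lemma main_lemma {d : ℕ} {α : ℝ} (hα : 0 < α) (F : Set (Euc d)) (hF : prePack d α F < ⊤)
    {q : ℝ} (hq : 0 < q) : NHfin d α q F < ⊤ := by
  classical
  obtain _ | d := d
  · -- trivial case `d = 0` : the space is a subsingleton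
    haveI : Subsingleton (Euc 0) :=
      (WithLp.equiv 2 (∀ _ : Fin 0, ℝ)).subsingleton
    have hle : NHfin 0 α q F ≤ 0 := by
      simp only [NHfin]
      refine iSup₂_le fun δ hδ => ?_
      refine le_trans (iInf_le_of_le (fun _ => (univ : Set (Euc 0)))
        (iInf_le_of_le (fun x _ => Set.mem_iUnion.mpr ⟨0, Set.mem_univ x⟩)
          (iInf_le_of_le (fun j => by
            rw [show EMetric.diam ((fun _ => (univ : Set (Euc 0))) j) = 0 from
              EMetric.diam_subsingleton (Set.subsingleton_of_subsingleton)]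
            exact hδ) le_rfl))) ?_
      have hb : ∀ k : ℤ, (dyadicBlock α (fun _ => (univ : Set (Euc 0))) k) ^ q = 0 := by
        intro k
        have : dyadicBlock α (fun _ => (univ : Set (Euc 0))) k = 0 := by
          simp only [dyadicBlock,
            EMetric.diam_subsingleton (Set.subsingleton_of_subsingleton)]
          rw [show EMetric.diam (univ : Set (Euc 0)) = 0 from
            EMetric.diam_subsingleton (Set.subsingleton_of_subsingleton)]
          rw [Set.indicator_of_notMem (zero_notin_Ico k)]
          exact tsum_zero
        rw [this, ENNReal.zero_rpow_of_pos hq]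
      simp only [hb, tsum_zero, le_refl]
    exact lt_of_le_of_lt hle (by simp)
  -- nontrivial case
  set P : ℝ≥0∞ := prePack (d+1) α F + 1 with hPdef
  have hPne : P ≠ ⊤ := by
    rw [hPdef]
    exact (ENNReal.add_lt_top.mpr ⟨hF, ENNReal.one_lt_top⟩).ne
  have h1 : prePack (d+1) α F < P := ENNReal.lt_add_right hF.ne one_ne_zero
  have h2 : (⨅ (δ : ℝ) (_ : 0 < δ),
      ⨆ (n : ℕ) (x : Fin n → Euc (d+1)) (r : Fin n → ℝ)
        (_ : ∀ i, x i ∈ F) (_ : ∀ i, 0 < r i) (_ : ∀ i, 2 * r i < δ)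
        (_ : Pairwise fun i j => Disjoint (Metric.ball (x i) (r i)) (Metric.ball (x j) (r j))),
        ∑ i : Fin n, ENNReal.ofReal ((2 * r i) ^ α)) < P := h1
  rw [iInf_lt_iff] at h2
  obtain ⟨δ₀, h2⟩ := h2
  rw [iInf_lt_iff] at h2
  obtain ⟨hδ₀, hsup⟩ := h2
  -- the key counting bound for separated sets
  have key : ∀ ε : ℝ, 0 < ε → ε < δ₀ → ∀ A : Finset (Euc (d+1)), ↑A ⊆ F →
      ((A : Set (Euc (d+1))).Pairwise fun a b => ε ≤ dist a b) →
      (A.card : ℝ≥0∞) * ENNReal.ofReal (ε ^ α) ≤ P := by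
    intro ε hε hεδ A hAF hsep
    have hpack : (∑ _i : Fin A.card, ENNReal.ofReal ((2 * (ε/2)) ^ α)) ≤
        ⨆ (n : ℕ) (x : Fin n → Euc (d+1)) (r : Fin n → ℝ)
          (_ : ∀ i, x i ∈ F) (_ : ∀ i, 0 < r i) (_ : ∀ i, 2 * r i < δ₀)
          (_ : Pairwise fun i j => Disjoint (Metric.ball (x i) (r i)) (Metric.ball (x j) (r j))),
          ∑ i : Fin n, ENNReal.ofReal ((2 * r i) ^ α) := by
      apply le_iSup_of_le A.card
      apply le_iSup_of_le (fun i => (A.equivFin.symm i : Euc (d+1)))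
      apply le_iSup_of_le (fun _ => ε/2)
      refine le_iSup_of_le (fun i => hAF (A.equivFin.symm i).2) ?_
      refine le_iSup_of_le (fun _ => half_pos hε) ?_
      refine le_iSup_of_le (fun _ => by linarith) ?_
      refine le_iSup_of_le ?_ le_rfl
      intro i j hij
      refine Metric.ball_disjoint_ball ?_
      have hne : ((A.equivFin.symm i : Euc (d+1))) ≠ ((A.equivFin.symm j : Euc (d+1))) := by
        intro h
        exact hij (A.equivFin.symm.injective (Subtype.coe_injective h))
      have := hsep (A.equivFin.symm i).2 (A.equivFin.symm j).2 hne
      linarith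
    calc (A.card : ℝ≥0∞) * ENNReal.ofReal (ε ^ α)
        = ∑ _i : Fin A.card, ENNReal.ofReal ((2 * (ε/2)) ^ α) := by
          rw [Finset.sum_const, Finset.card_univ, Fintype.card_fin, nsmul_eq_mul]
          congr 2
          ring
      _ ≤ _ := hpack
      _ ≤ P := hsup.le
  -- now bound NHfin
  have hbound : NHfin (d+1) α q F ≤ (P * ENNReal.ofReal ((2:ℝ) ^ α)) ^ q := by
    simp only [NHfin]
    refine iSup₂_le fun δ hδ => ?_
    -- pick a real scale below δ
    obtain ⟨c, hc0, hcδ⟩ : ∃ c : ℝ, 0 < c ∧ ENNReal.ofReal c < δ := by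
      rcases eq_or_ne δ ⊤ with rfl | hδtop
      · exact ⟨1, one_pos, ENNReal.ofReal_lt_top⟩
      · have ht : 0 < δ.toReal := ENNReal.toReal_pos hδ.ne' hδtop
        refine ⟨δ.toReal / 2, by positivity, ?_⟩
        rw [ENNReal.ofReal_lt_iff_lt_toReal (by positivity) hδtop]
        linarith
    obtain ⟨m, hm⟩ := exists_pow_lt_of_lt_one (lt_min hc0 hδ₀) (by norm_num : (1:ℝ)/2 < 1)
    set ρ : ℝ := (2:ℝ)^(-(m:ℤ)-1) with hρdef
    have hρpos : 0 < ρ := by positivity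
    have hρlt : ρ < min c δ₀ := by
      have hlt1 : ρ < (2:ℝ)^(-(m:ℤ)) := by
        rw [hρdef]
        exact (zpow_lt_zpow_iff_right₀ (by norm_num : (1:ℝ) < 2)).mpr (by omega)
      have heq1 : (2:ℝ)^(-(m:ℤ)) = ((1:ℝ)/2)^m := by
        rw [one_div, inv_pow, ← zpow_natCast, ← zpow_neg]
      linarith [hm]
    have hρc : ρ < c := lt_of_lt_of_le hρlt (min_le_left _ _)
    have hρδ₀ : ρ < δ₀ := lt_of_lt_of_le hρlt (min_le_right _ _)
    set ε : ℝ := ρ/2 with hεdef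
    have hε : 0 < ε := by rw [hεdef]; positivity
    have hεδ₀ : ε < δ₀ := by rw [hεdef]; linarith
    -- bound on cardinalities of separated sets
    have hofReal_pos : 0 < ENNReal.ofReal (ε^α) :=
      ENNReal.ofReal_pos.mpr (Real.rpow_pos_of_pos hε α)
    set X : ℝ≥0∞ := P / ENNReal.ofReal (ε^α) with hXdef
    have hXtop : X ≠ ⊤ := (ENNReal.div_lt_top hPne hofReal_pos.ne').ne
    set b : ℕ := ⌈X.toReal⌉₊ with hbdef
    have hcardle : ∀ A : Finset (Euc (d+1)), ↑A ⊆ F →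
        ((A : Set (Euc (d+1))).Pairwise fun a b => ε ≤ dist a b) → A.card ≤ b := by
      intro A h1' h2'
      have h3 := key ε hε hεδ₀ A h1' h2'
      have h4 : (A.card : ℝ≥0∞) ≤ X :=
        (ENNReal.le_div_iff_mul_le (Or.inl hofReal_pos.ne') (Or.inl ENNReal.ofReal_ne_top)).mpr h3
      have h5 : (A.card : ℝ) ≤ X.toReal := by
        have := ENNReal.toReal_mono hXtop h4
        simpa using this
      have h6 := Nat.ceil_mono h5
      rwa [Nat.ceil_natCast] at h6
    -- a maximal separated set
    set Q : ℕ → Prop := fun n => ∃ A : Finset (Euc (d+1)), ↑A ⊆ F ∧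
        ((A : Set (Euc (d+1))).Pairwise fun a b => ε ≤ dist a b) ∧ A.card = n with hQdef
    have hQ0 : Q 0 := ⟨∅, by simp, by simp, rfl⟩
    obtain ⟨A, hAF, hAsep, hAcard⟩ := Nat.findGreatest_spec (Nat.zero_le b) hQ0
    have hAmax : ∀ z ∈ F, ∃ a ∈ A, dist z a ≤ ε := by
      intro z hz
      by_contra hzc
      push_neg at hzc
      have hzA : z ∉ A := by
        intro h
        have := hzc z h
        rw [dist_self] at this
        linarith
      have hQ' : Q (A.card + 1) := by
        refine ⟨insert z A, ?_, ?_, Finset.card_insert_of_notMem hzA⟩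
        · intro y hy
          rcases Finset.mem_insert.mp hy with rfl | hy
          · exact hz
          · exact hAF hy
        · rw [Finset.coe_insert]
          refine Set.pairwise_insert.mpr ⟨hAsep, fun w hw _ => ?_⟩
          refine ⟨?_, ?_⟩
          · exact (hzc w hw).le
          · rw [dist_comm]; exact (hzc w hw).le
      have hle' : A.card + 1 ≤ b := by
        obtain ⟨A', h1', h2', h3'⟩ := hQ'
        rw [← h3']
        exact hcardle A' h1' h2'
      have := Nat.le_findGreatest hle' hQ'
      omega
    -- diameter of the covering balls
    set u : Euc (d+1) := EuclideanSpace.single (0 : Fin (d+1)) (1:ℝ) with hudef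
    have hu : ‖u‖ = 1 := by rw [hudef, EuclideanSpace.norm_single]; norm_num
    have hρ2ε : ρ = 2*ε := by rw [hεdef]; ring
    have hdiamball : ∀ a : Euc (d+1),
        EMetric.diam (Metric.closedBall a ε) = ENNReal.ofReal ρ := by
      intro a
      refine le_antisymm ?_ ?_
      · rw [← Metric.emetric_closedBall hε.le]
        refine le_trans EMetric.diam_closedBall (le_of_eq ?_)
        rw [hρ2ε, ENNReal.ofReal_mul (by norm_num), ENNReal.ofReal_ofNat]
      · have h1' : a + ε • u ∈ Metric.closedBall a ε := by
          rw [Metric.mem_closedBall, dist_eq_norm, add_sub_cancel_left, norm_smul, hu,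
            Real.norm_of_nonneg hε.le, mul_one]
        have h2' : a - ε • u ∈ Metric.closedBall a ε := by
          rw [Metric.mem_closedBall, dist_eq_norm, sub_sub_cancel_left, norm_neg, norm_smul, hu,
            Real.norm_of_nonneg hε.le, mul_one]
        have h3' := EMetric.edist_le_diam_of_mem h1' h2'
        rw [edist_dist] at h3'
        refine le_trans (le_of_eq ?_) h3'
        congr 1
        have hv : (a + ε • u) - (a - ε • u) = (2*ε) • u := by
          rw [two_mul, add_smul]
          abel
        rw [dist_eq_norm, hv, norm_smul, hu, mul_one, Real.norm_of_nonneg (by positivity)]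
        exact hρ2ε
    -- the covering
    set Bc : ℕ → Set (Euc (d+1)) := fun j =>
      if h : j < A.card then Metric.closedBall ((A.equivFin.symm ⟨j, h⟩ : Euc (d+1))) ε else ∅
      with hBc
    have hcov : F ⊆ ⋃ j, Bc j := by
      intro z hz
      obtain ⟨a, haA, hdist⟩ := hAmax z hz
      refine Set.mem_iUnion.mpr ⟨((A.equivFin ⟨a, haA⟩ : Fin A.card) : ℕ), ?_⟩
      have hlt : ((A.equivFin ⟨a, haA⟩ : Fin A.card) : ℕ) < A.card := (A.equivFin ⟨a, haA⟩).2
      rw [hBc]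
      simp only [dif_pos hlt]
      have heq : A.equivFin.symm ⟨((A.equivFin ⟨a, haA⟩ : Fin A.card) : ℕ), hlt⟩ = ⟨a, haA⟩ :=
        A.equivFin.symm_apply_apply _
      rw [heq]
      exact Metric.mem_closedBall.mpr hdist
    have hBdiam : ∀ j, EMetric.diam (Bc j) =
        if j < A.card then ENNReal.ofReal ρ else 0 := by
      intro j
      rw [hBc]
      by_cases h : j < A.card
      · simp only [dif_pos h, if_pos h]
        exact hdiamball _
      · simp only [dif_neg h, if_neg h]
        exact EMetric.diam_empty
    have hdiamlt : ∀ j, EMetric.diam (Bc j) < δ := by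
      intro j
      rw [hBdiam j]
      by_cases h : j < A.card
      · rw [if_pos h]
        exact lt_trans ((ENNReal.ofReal_lt_ofReal_iff hc0).mpr hρc) hcδ
      · rw [if_neg h]
        exact hδ
    refine le_trans (iInf_le_of_le Bc (iInf_le_of_le hcov (iInf_le_of_le hdiamlt le_rfl))) ?_
    -- compute the dyadic blocks
    have hmem : ENNReal.ofReal ρ ∈
        Set.Ico ((2:ℝ≥0∞)^(-(m:ℤ)-1)) ((2:ℝ≥0∞)^(-(m:ℤ))) := by
      rw [hρdef, ofReal_two_zpow]
      exact ⟨le_rfl, two_zpow_lt_iff'.mpr (by omega)⟩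
    have hnotmem : ∀ k : ℤ, k ≠ (m:ℤ) → ENNReal.ofReal ρ ∉
        Set.Ico ((2:ℝ≥0∞)^(-k-1)) ((2:ℝ≥0∞)^(-k)) := by
      intro k hk hmem'
      rw [hρdef, ofReal_two_zpow] at hmem'
      have ha1 := two_zpow_le_iff'.mp hmem'.1
      have ha2 := two_zpow_lt_iff'.mp hmem'.2
      omega
    have hterm : ∀ (k : ℤ) (j : ℕ),
        (Set.Ico ((2:ℝ≥0∞)^(-k-1)) ((2:ℝ≥0∞)^(-k))).indicator
          (fun t => t ^ α) (EMetric.diam (Bc j)) =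
        if j < A.card then
          (Set.Ico ((2:ℝ≥0∞)^(-k-1)) ((2:ℝ≥0∞)^(-k))).indicator
            (fun t => t ^ α) (ENNReal.ofReal ρ) else 0 := by
      intro k j
      rw [hBdiam j]
      by_cases h : j < A.card
      · rw [if_pos h, if_pos h]
      · rw [if_neg h, if_neg h, Set.indicator_of_notMem (zero_notin_Ico _)]
    have hblockm : dyadicBlock α Bc (m:ℤ) = (A.card : ℝ≥0∞) * (ENNReal.ofReal ρ)^α := by
      simp only [dyadicBlock]
      rw [tsum_congr (hterm (m:ℤ))]
      rw [tsum_eq_sum (s := Finset.range A.card)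
        (fun j hj => if_neg (by simpa using hj))]
      rw [Finset.sum_congr rfl (fun j hj => if_pos (Finset.mem_range.mp hj))]
      rw [Set.indicator_of_mem hmem, Finset.sum_const, Finset.card_range, nsmul_eq_mul]
    have hblockk : ∀ k : ℤ, k ≠ (m:ℤ) → dyadicBlock α Bc k = 0 := by
      intro k hk
      simp only [dyadicBlock]
      rw [tsum_congr (hterm k)]
      have : ∀ j : ℕ, (if j < A.card then
          (Set.Ico ((2:ℝ≥0∞)^(-k-1)) ((2:ℝ≥0∞)^(-k))).indicator
            (fun t => t ^ α) (ENNReal.ofReal ρ) else 0) = 0 := by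
        intro j
        by_cases h : j < A.card
        · rw [if_pos h, Set.indicator_of_notMem (hnotmem k hk)]
        · rw [if_neg h]
      rw [tsum_congr this, tsum_zero]
    calc ∑' k : ℤ, (dyadicBlock α Bc k)^q
        = (dyadicBlock α Bc (m:ℤ))^q :=
          tsum_eq_single (m:ℤ) (fun k hk => by
            rw [hblockk k hk, ENNReal.zero_rpow_of_pos hq])
      _ ≤ (P * ENNReal.ofReal ((2:ℝ)^α))^q := by
          refine ENNReal.rpow_le_rpow ?_ hq.le
          rw [hblockm]
          have e1 : (ENNReal.ofReal ρ)^α = ENNReal.ofReal (ρ^α) :=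
            ENNReal.ofReal_rpow_of_pos hρpos
          have e2 : ρ ^ α = 2^α * ε^α := by
            rw [hρ2ε, Real.mul_rpow (by norm_num) hε.le]
          rw [e1, e2, ENNReal.ofReal_mul (by positivity)]
          calc (A.card:ℝ≥0∞) * (ENNReal.ofReal ((2:ℝ)^α) * ENNReal.ofReal (ε^α))
              = ENNReal.ofReal ((2:ℝ)^α) * ((A.card:ℝ≥0∞) * ENNReal.ofReal (ε^α)) := by
                ring
            _ ≤ ENNReal.ofReal ((2:ℝ)^α) * P :=
                mul_le_mul_right (key ε hε hεδ₀ A hAF hAsep) _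
            _ = P * ENNReal.ofReal ((2:ℝ)^α) := mul_comm _ _
  exact lt_of_le_of_lt hbound
    (ENNReal.rpow_lt_top_of_nonneg hq.le
      (ENNReal.mul_ne_top hPne ENNReal.ofReal_ne_top))

/-- If a compact `S ⊆ ℝ^d` has finite `α`-packing pre-measure, then `𝓗_{α,q}(S) < ∞` for
every `q > 0`; consequently, a set σ-finite for the `α`-packing measure is σ-finite
for `𝓗_{α,q}`. -/
theorem stmt9 (d : ℕ) (α : ℝ) (hα : 0 < α) :
    (∀ S : Set (Euc d), IsCompact S → prePack d α S < ⊤ →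
      ∀ q : ℝ, 0 < q → NHfin d α q S < ⊤) ∧
    (∀ S : Set (Euc d),
      (∃ T : ℕ → Set (Euc d), S ⊆ ⋃ j, T j ∧ ∀ j, packMeasure d α (T j) < ⊤) →
      ∀ q : ℝ, 0 < q →
        ∃ T : ℕ → Set (Euc d), S ⊆ ⋃ j, T j ∧ ∀ j, NHfin d α q (T j) < ⊤) := by
  constructor
  · intro S _ hS q hq
    exact main_lemma hα S hS hq
  · rintro S ⟨T, hST, hT⟩ q hq
    have hchoice : ∀ j, ∃ B : ℕ → Set (Euc d), T j ⊆ ⋃ i, B i ∧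
        ∀ i, prePack d α (B i) < ⊤ := by
      intro j
      have h := hT j
      simp only [packMeasure] at h
      rw [iInf_lt_iff] at h
      obtain ⟨B, h⟩ := h
      rw [iInf_lt_iff] at h
      obtain ⟨hcov, hsum⟩ := h
      exact ⟨B, hcov, fun i => lt_of_le_of_lt (ENNReal.le_tsum i) hsum⟩
    choose B hBcov hBfin using hchoice
    refine ⟨fun n => B (Nat.unpair n).1 (Nat.unpair n).2, ?_, fun n =>
      main_lemma hα _ (hBfin _ _) hq⟩
    intro x hx
    obtain ⟨j, hj⟩ := Set.mem_iUnion.mp (hST hx)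
    obtain ⟨i, hi⟩ := Set.mem_iUnion.mp (hBcov j hj)
    exact Set.mem_iUnion.mpr ⟨Nat.pair j i, by simpa [Nat.unpair_pair] using hi⟩
end
end

section
/- For any fixed ball $B_{r_j}(x_j)$ in a disjoint family of balls with radii less than 1, the number of balls $B_{r_k}(x_k)$ in the family with $2^n r_j \le r_k < 2^{n+1} r_j$ and $|x_j - x_k| \le 3(r_k + r_j)$ is at most $14^d$. -/
open Set Metric MeasureTheory ENNReal

noncomputable section

/-- Given a pairwise disjoint family of open balls `B_{r_i}(x_i)` in `ℝ^d` with radii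
less than `1`, for any fixed ball `B_{r_j}(x_j)` and any `n`, the number of balls
`B_{r_k}(x_k)` of the family with `2^n r_j ≤ r_k < 2^{n+1} r_j` and
`|x_j - x_k| ≤ 3 (r_k + r_j)` is at most `14^d`. -/
theorem stmt13 (d : ℕ) {ι : Type*} [Fintype ι] (x : ι → Euc d) (r : ι → ℝ)
    (hr : ∀ i, 0 < r i) (hr1 : ∀ i, r i < 1)
    (hdisj : Pairwise fun i j => Disjoint (ball (x i) (r i)) (ball (x j) (r j)))
    (j : ι) (n : ℕ) :
    {k : ι | 2 ^ n * r j ≤ r k ∧ r k < 2 ^ (n + 1) * r j ∧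
        dist (x j) (x k) ≤ 3 * (r k + r j)}.ncard ≤ 14 ^ d := by
  classical
  set R : ℝ := 2 ^ n * r j with hR
  have hRpos : 0 < R := by have := hr j; positivity
  set s : Set ι := {k : ι | R ≤ r k ∧ r k < 2 ^ (n + 1) * r j ∧
      dist (x j) (x k) ≤ 3 * (r k + r j)} with hs
  have hfin : s.Finite := Set.toFinite s
  set t : Finset ι := hfin.toFinset with ht
  have hcard : s.ncard = t.card := Set.ncard_eq_toFinset_card s hfin
  rcases Nat.eq_zero_or_pos d with hd | hd
  · subst hd
    haveI : Subsingleton ι := ⟨fun a b => by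
      by_contra hab
      have h1 : x a ∈ ball (x a) (r a) := mem_ball_self (hr a)
      have h2 : x a ∈ ball (x b) (r b) := by
        have hx : x a = x b := Subsingleton.elim _ _
        rw [hx]; exact mem_ball_self (hr b)
      exact Set.disjoint_left.mp (hdisj hab) h1 h2⟩
    have h1 : s.ncard ≤ Nat.card ι := by
      rw [← Set.ncard_univ]
      exact Set.ncard_le_ncard (Set.subset_univ s) Set.finite_univ
    have h2 : Nat.card ι ≤ 1 := by
      rw [Nat.card_eq_fintype_card]
      exact Fintype.card_le_one_iff_subsingleton.mpr ‹_›
    simpa using h1.trans h2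
  haveI : Nonempty (Fin d) := ⟨⟨0, hd⟩⟩
  haveI : Nontrivial (Euc d) := inferInstance
  set c : ℝ≥0∞ := volume (ball (0 : Euc d) 1) with hc
  have hμ : ∀ i : ι, volume (ball (x i) (r i)) = ENNReal.ofReal (r i ^ d) * c := by
    intro i
    rw [hc, Measure.addHaar_ball _ _ (hr i).le, finrank_euclideanSpace_fin]
  have h2n : (1 : ℝ) ≤ 2 ^ n := one_le_pow₀ (by norm_num)
  have hrjR : r j ≤ R := by
    rw [hR]; nlinarith [hr j]
  have hsub : ∀ k ∈ t, ball (x k) (r k) ⊆ ball (x j) (14 * R) := by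
    intro k hk
    rw [ht, Set.Finite.mem_toFinset] at hk
    obtain ⟨h1, h2, h3⟩ := hk
    apply ball_subset_ball'
    have h2' : r k ≤ 2 * R := by
      rw [hR]; rw [pow_succ] at h2; linarith
    rw [dist_comm]
    linarith
  have hA0 : ENNReal.ofReal (R ^ d) * c ≠ 0 := by
    apply mul_ne_zero
    · simp [ENNReal.ofReal_eq_zero, not_le]; positivity
    · exact (measure_ball_pos volume _ one_pos).ne'
  have hAt : ENNReal.ofReal (R ^ d) * c ≠ ⊤ := by
    exact ENNReal.mul_ne_top ENNReal.ofReal_ne_top measure_ball_lt_top.ne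
  have key : (t.card : ℝ≥0∞) * (ENNReal.ofReal (R ^ d) * c)
      ≤ (14 ^ d : ℕ) * (ENNReal.ofReal (R ^ d) * c) := by
    calc (t.card : ℝ≥0∞) * (ENNReal.ofReal (R ^ d) * c)
        = ∑ _k ∈ t, ENNReal.ofReal (R ^ d) * c := by
          rw [Finset.sum_const, nsmul_eq_mul]
      _ ≤ ∑ k ∈ t, volume (ball (x k) (r k)) := by
          refine Finset.sum_le_sum fun k hk => ?_
          rw [hμ k]
          rw [ht, Set.Finite.mem_toFinset] at hk
          exact mul_le_mul_left (ENNReal.ofReal_le_ofReal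
            (pow_le_pow_left₀ hRpos.le hk.1 d)) c
      _ = volume (⋃ k ∈ t, ball (x k) (r k)) := by
          refine (measure_biUnion_finset ?_ fun k _ => measurableSet_ball).symm
          intro a ha b hb hab
          exact hdisj hab
      _ ≤ volume (ball (x j) (14 * R)) := by
          exact measure_mono (Set.iUnion₂_subset hsub)
      _ = (14 ^ d : ℕ) * (ENNReal.ofReal (R ^ d) * c) := by
          rw [hc, Measure.addHaar_ball _ _ (by positivity : (0:ℝ) ≤ 14 * R),
            finrank_euclideanSpace_fin, mul_pow,
            ENNReal.ofReal_mul (by positivity), ← mul_assoc]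
          congr 1
          rw [ENNReal.ofReal_pow (by norm_num)]
          norm_num
  have hle : (t.card : ℝ≥0∞) ≤ (14 ^ d : ℕ) :=
    (ENNReal.mul_le_mul_iff_left hA0 hAt).mp key
  rw [hcard]
  exact_mod_cast hle
end
end
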